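/- arXiv:1507.03853 — 8 statements merged into one kernel-verified Lean document; each statement's English description precedes it below -/
import Mathlib

section
/- Let M be a finitely generated graded module over a standard graded polynomial ring R = K[x_1,...,x_n] such that all minimal generators of M have degree at most d, and let ℓ ∈ R be a linear form. If the multiplication map ×ℓ : M_{d-1} → M_d is surjective, then the multiplication map ×ℓ : M_{j-1} → M_j is surjective for all j ≥ d. -/
open MvPolynomial

/-!
Because `M` is generated in degrees `≤ d`, for `j ≥ d` the space `M_{j+1}` is `K`-spanned by the
products `x_k • y` with `y ∈ M_j`. If `y = ℓ • w` with `w ∈ M_{j-1}`, then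
`x_k • y = ℓ • (x_k • w)` with `x_k • w ∈ M_j`, so surjectivity of `×ℓ` climbs from degree `j` to
degree `j + 1`.
-/

namespace DirectSum

variable {ι S M σ : Type*} [DecidableEq ι] [Add ι] [IsRightCancelAdd ι]
  [AddCommMonoid M] [SetLike σ M] [AddSubmonoidClass σ M] (ℳ : ι → σ) [Decomposition ℳ]

theorem decompose_smul_of_forall_smul_mem [DistribSMul S M] {r : S} {e : ι}
    (hr : ∀ i, ∀ m ∈ ℳ i, r • m ∈ ℳ (i + e)) (x : M) (j : ι) :
    (decompose ℳ (r • x) (j + e) : M) = r • (decompose ℳ x j : M) := by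
  induction x using Decomposition.inductionOn ℳ with
  | zero => simp
  | @homogeneous i m =>
    obtain ⟨m, hm⟩ := m
    by_cases hij : i = j
    · subst hij
      rw [decompose_of_mem_same ℳ hm, decompose_of_mem_same ℳ (hr i m hm)]
    · rw [decompose_of_mem_ne ℳ hm hij,
        decompose_of_mem_ne ℳ (hr i m hm) (fun h => hij (add_right_cancel h)), smul_zero]
  | add a b ha hb => simp [smul_add, ha, hb]

end DirectSum

section

variable {K M : Type*} [Field K] [AddCommGroup M] [Module K M]

def spanXSmul (σ : Type*) [Module (MvPolynomial σ K) M] (ℳ : ℤ → Submodule K M) (j : ℤ) :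
    Submodule K M :=
  Submodule.span K {z | ∃ (k : σ), ∃ y ∈ ℳ j, (X k : MvPolynomial σ K) • y = z}

variable {σ : Type*} [Module (MvPolynomial σ K) M] {ℳ : ℤ → Submodule K M}

theorem spanXSmul_le_map_smul [IsScalarTower K (MvPolynomial σ K) M]
    (hX : ∀ (k : σ) (j : ℤ), ∀ m ∈ ℳ j, (X k : MvPolynomial σ K) • m ∈ ℳ (j + 1))
    {ℓ : MvPolynomial σ K} {j : ℤ} (hsurj : ∀ x ∈ ℳ j, ∃ y ∈ ℳ (j - 1), ℓ • y = x) :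
    spanXSmul σ ℳ j ≤ (ℳ j).map (DistribSMul.toLinearMap K M ℓ) := by
  refine Submodule.span_le.2 ?_
  rintro _ ⟨k, y, hy, rfl⟩
  obtain ⟨w, hw, rfl⟩ := hsurj y hy
  refine ⟨X k • w, by simpa using hX k _ w hw, ?_⟩
  simp only [DistribSMul.toLinearMap_apply, smul_smul, mul_comm]

variable [DirectSum.Decomposition ℳ]

theorem decompose_X_smul_mem_spanXSmul
    (hX : ∀ (k : σ) (j : ℤ), ∀ m ∈ ℳ j, (X k : MvPolynomial σ K) • m ∈ ℳ (j + 1))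
    (k : σ) (x : M) (j : ℤ) :
    (DirectSum.decompose ℳ ((X k : MvPolynomial σ K) • x) (j + 1) : M) ∈ spanXSmul σ ℳ j := by
  rw [DirectSum.decompose_smul_of_forall_smul_mem ℳ (hX k)]
  exact Submodule.subset_span ⟨k, _, Submodule.coe_mem _, rfl⟩

theorem decompose_smul_mem_spanXSmul [IsScalarTower K (MvPolynomial σ K) M]
    (hX : ∀ (k : σ) (j : ℤ), ∀ m ∈ ℳ j, (X k : MvPolynomial σ K) • m ∈ ℳ (j + 1))
    {x : M} {j : ℤ} (hx : (DirectSum.decompose ℳ x (j + 1) : M) ∈ spanXSmul σ ℳ j)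
    (p : MvPolynomial σ K) :
    (DirectSum.decompose ℳ (p • x) (j + 1) : M) ∈ spanXSmul σ ℳ j := by
  induction p using MvPolynomial.induction_on generalizing x with
  | C a =>
    rw [← algebraMap_eq, algebraMap_smul, DirectSum.decompose_smul]
    exact (spanXSmul σ ℳ j).smul_mem a hx
  | add p q hp hq =>
    rw [add_smul, DirectSum.decompose_add, DirectSum.add_apply, Submodule.coe_add]
    exact add_mem (hp hx) (hq hx)
  | mul_X p k hp =>
    rw [mul_smul]
    exact hp (decompose_X_smul_mem_spanXSmul hX k x j)

theorem le_spanXSmul_of_span_eq_top [IsScalarTower K (MvPolynomial σ K) M]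
    (hX : ∀ (k : σ) (j : ℤ), ∀ m ∈ ℳ j, (X k : MvPolynomial σ K) • m ∈ ℳ (j + 1))
    {d : ℤ} (hgen : Submodule.span (MvPolynomial σ K) (⋃ j ≤ d, (ℳ j : Set M)) = ⊤)
    {j : ℤ} (hj : d ≤ j) : ℳ (j + 1) ≤ spanXSmul σ ℳ j := by
  suffices ∀ x, (DirectSum.decompose ℳ x (j + 1) : M) ∈ spanXSmul σ ℳ j from
    fun x hx => DirectSum.decompose_of_mem_same ℳ hx ▸ this x
  intro x
  have hx : x ∈ Submodule.span (MvPolynomial σ K) (⋃ j ≤ d, (ℳ j : Set M)) := hgen ▸ trivial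
  induction hx using Submodule.span_induction with
  | mem y hy =>
    obtain ⟨i, hi, hy⟩ := Set.mem_iUnion₂.1 hy
    rw [DirectSum.decompose_of_mem_ne ℳ hy (by omega)]
    exact zero_mem _
  | zero => simp
  | add a b _ _ ha hb =>
    rw [DirectSum.decompose_add, DirectSum.add_apply, Submodule.coe_add]
    exact add_mem ha hb
  | smul p y _ hy => exact decompose_smul_mem_spanXSmul hX hy p

end

theorem stmt0_general {K : Type*} [Field K] {n : ℕ} {M : Type*} [AddCommGroup M]
    [Module (MvPolynomial (Fin n) K) M] [Module K M]
    [IsScalarTower K (MvPolynomial (Fin n) K) M]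
    (ℳ : ℤ → Submodule K M)
    (internal : DirectSum.IsInternal ℳ)
    (smul_mem : ∀ (i : ℕ) (j : ℤ) (r : MvPolynomial (Fin n) K),
      r ∈ MvPolynomial.homogeneousSubmodule (Fin n) K i → ∀ m ∈ ℳ j, r • m ∈ ℳ ((i : ℤ) + j))
    (d : ℤ)
    (hgen : Submodule.span (MvPolynomial (Fin n) K) (⋃ j ≤ d, (ℳ j : Set M)) = ⊤)
    (ℓ : MvPolynomial (Fin n) K)
    (hsurj : ∀ x ∈ ℳ d, ∃ y ∈ ℳ (d - 1), ℓ • y = x) :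
    ∀ j : ℤ, d ≤ j → ∀ x ∈ ℳ j, ∃ y ∈ ℳ (j - 1), ℓ • y = x := by
  have := internal.chooseDecomposition
  have hX (k : Fin n) (j : ℤ) (m : M) (hm : m ∈ ℳ j) :
      (X k : MvPolynomial (Fin n) K) • m ∈ ℳ (j + 1) := by
    simpa [add_comm] using smul_mem 1 j (X k) (isHomogeneous_X K k) m hm
  refine Int.leInduction hsurj fun j hj ih x hx => ?_
  obtain ⟨y, hy, rfl⟩ := spanXSmul_le_map_smul hX ih (le_spanXSmul_of_span_eq_top hX hgen hj hx)
  exact ⟨y, by simpa using hy, rfl⟩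

/-- **Lemma (mod-surj).** Let `M` be a graded module over `R = K[x₁,…,xₙ]` (with grading `ℳ`)
whose minimal generators all have degree at most `d`, and let `ℓ ∈ R` be a linear form.
If `×ℓ : M_{d-1} → M_d` is surjective, then `×ℓ : M_{j-1} → M_j` is surjective for all `j ≥ d`. -/
theorem stmt0 {K : Type*} [Field K] {n : ℕ} {M : Type*} [AddCommGroup M]
    [Module (MvPolynomial (Fin n) K) M] [Module K M]
    [IsScalarTower K (MvPolynomial (Fin n) K) M]
    (ℳ : ℤ → Submodule K M)
    (internal : DirectSum.IsInternal ℳ)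
    (smul_mem : ∀ (i : ℕ) (j : ℤ) (r : MvPolynomial (Fin n) K),
      r ∈ MvPolynomial.homogeneousSubmodule (Fin n) K i → ∀ m ∈ ℳ j, r • m ∈ ℳ ((i : ℤ) + j))
    (hfg : Module.Finite (MvPolynomial (Fin n) K) M)
    (d : ℤ)
    (hgen : Submodule.span (MvPolynomial (Fin n) K) (⋃ j ≤ d, (ℳ j : Set M)) = ⊤)
    (ℓ : MvPolynomial (Fin n) K) (hℓ : ℓ.IsHomogeneous 1)
    (hsurj : ∀ x ∈ ℳ d, ∃ y ∈ ℳ (d - 1), ℓ • y = x) :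
    ∀ j : ℤ, d ≤ j → ∀ x ∈ ℳ j, ∃ y ∈ ℳ (j - 1), ℓ • y = x :=
  stmt0_general ℳ internal smul_mem d hgen ℓ hsurj
end

section
/- Let A be a nonzero Artinian standard graded K-algebra and let d be the smallest integer such that the Hilbert function satisfies h_A(d-1) > h_A(d). If A has a nonzero socle element of degree less than d-1, then A does not have the weak Lefschetz property. -/
/-! A linear form `ℓ` annihilates every socle element `s`, so in the degree `e` of `s` the map
`×ℓ : A_e → A_{e+1}` is not injective. Since `e + 1 < d`, minimality of `d` gives
`h_A(e) ≤ h_A(e + 1)`, so `×ℓ` cannot be surjective there either. -/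

open MvPolynomial

noncomputable def comp (K : Type*) [Field K] {n : ℕ} (I : Ideal (MvPolynomial (Fin n) K)) (j : ℤ) :
    Submodule K (MvPolynomial (Fin n) K ⧸ I) :=
  if 0 ≤ j then
    (MvPolynomial.homogeneousSubmodule (Fin n) K j.toNat).map
      (Ideal.Quotient.mkₐ K I).toLinearMap
  else ⊥

noncomputable def hilb (K : Type*) [Field K] {n : ℕ} (I : Ideal (MvPolynomial (Fin n) K)) (j : ℤ) : ℕ :=
  Module.finrank K (comp K I j)

def WLP (K : Type*) [Field K] {n : ℕ} (I : Ideal (MvPolynomial (Fin n) K)) : Prop :=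
  ∃ ℓ : MvPolynomial (Fin n) K, ℓ.IsHomogeneous 1 ∧ ∀ j : ℤ,
    (∀ x ∈ comp K I j, Ideal.Quotient.mk I ℓ * x = 0 → x = 0) ∨
    (comp K I (j + 1) ≤ (comp K I j).map (LinearMap.mulLeft K (Ideal.Quotient.mk I ℓ)))

theorem MvPolynomial.mem_ideal_span_range_X_of_coeff_zero {σ R : Type*} [CommSemiring R]
    {p : MvPolynomial σ R} (hp : p.coeff 0 = 0) : p ∈ Ideal.span (Set.range X) := by
  rw [← Set.image_univ, mem_ideal_span_X_image]
  intro m hm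
  obtain ⟨i, hi⟩ := Finsupp.ne_iff.mp (ne_of_mem_of_not_mem hm (notMem_support_iff.mpr hp))
  exact ⟨i, Set.mem_univ i, hi⟩

theorem MvPolynomial.map_mul_eq_zero_of_coeff_zero {σ R A : Type*} [CommSemiring R]
    [CommSemiring A] (f : MvPolynomial σ R →+* A) {s : A} (hs : ∀ i, f (X i) * s = 0)
    {p : MvPolynomial σ R} (hp : p.coeff 0 = 0) : f p * s = 0 := by
  have hspan := mem_ideal_span_range_X_of_coeff_zero hp
  clear hp
  induction hspan using Submodule.span_induction with
  | mem x hx =>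
    obtain ⟨i, rfl⟩ := hx
    exact hs i
  | zero => simp
  | add x y _ _ hx hy => rw [map_add, add_mul, hx, hy, add_zero]
  | smul a x _ hx => rw [smul_eq_mul, map_mul, mul_assoc, hx, mul_zero]

theorem Submodule.finrank_map_lt_of_mem_ker {K V W : Type*} [DivisionRing K] [AddCommGroup V]
    [Module K V] [AddCommGroup W] [Module K W] (f : V →ₗ[K] W) {p : Submodule K V}
    [FiniteDimensional K p] {x : V} (hx : x ∈ p) (hx0 : x ≠ 0) (hfx : f x = 0) :
    Module.finrank K (p.map f) < Module.finrank K p := by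
  have hker : 0 < Module.finrank K (LinearMap.ker (f ∘ₗ p.subtype)) :=
    Module.finrank_pos_iff_exists_ne_zero.mpr
      ⟨⟨⟨x, hx⟩, hfx⟩, by simpa [Subtype.ext_iff] using hx0⟩
  have hrank := LinearMap.finrank_range_add_finrank_ker (f ∘ₗ p.subtype)
  rw [LinearMap.range_comp, Submodule.range_subtype] at hrank
  omega

theorem stmt1_general {K : Type*} [Field K] {n : ℕ} (I : Ideal (MvPolynomial (Fin n) K))
    (hArt : Module.Finite K (MvPolynomial (Fin n) K ⧸ I))
    (d : ℤ)
    (hdmin : ∀ d' : ℤ, d' < d → ¬ hilb K I d' < hilb K I (d' - 1))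
    (e : ℤ) (he : e < d - 1)
    (s : MvPolynomial (Fin n) K ⧸ I) (hs : s ∈ comp K I e) (hs0 : s ≠ 0)
    (hsoc : ∀ i : Fin n, Ideal.Quotient.mk I (MvPolynomial.X i) * s = 0) :
    ¬ WLP K I := by
  rintro ⟨ℓ, hℓ, hwlp⟩
  have hℓs : Ideal.Quotient.mk I ℓ * s = 0 :=
    map_mul_eq_zero_of_coeff_zero _ hsoc (hℓ.coeff_eq_zero (by simp))
  rcases hwlp e with hinj | hsurj
  · exact hs0 (hinj s hs hℓs)
  · have hnondecreasing := hdmin (e + 1) (by omega)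
    rw [add_sub_cancel_right] at hnondecreasing
    exact hnondecreasing <| (Submodule.finrank_mono hsurj).trans_lt <|
      Submodule.finrank_map_lt_of_mem_ker _ hs hs0 hℓs

/-- **Proposition (wlp (i)).** Let `A = R/I ≠ 0` be an Artinian standard graded `K`-algebra and
`d` the smallest integer with `h_A(d-1) > h_A(d)`. If `A` has a nonzero socle element of degree
less than `d - 1`, then `A` does not have the weak Lefschetz property. -/
theorem stmt1 {K : Type*} [Field K] {n : ℕ} (I : Ideal (MvPolynomial (Fin n) K))
    (hhom : ∀ p ∈ I, ∀ j : ℕ, MvPolynomial.homogeneousComponent j p ∈ I)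
    (hArt : Module.Finite K (MvPolynomial (Fin n) K ⧸ I))
    (hne : I ≠ ⊤)
    (d : ℤ)
    (hd : hilb K I d < hilb K I (d - 1))
    (hdmin : ∀ d' : ℤ, d' < d → ¬ hilb K I d' < hilb K I (d' - 1))
    (e : ℤ) (he : e < d - 1)
    (s : MvPolynomial (Fin n) K ⧸ I) (hs : s ∈ comp K I e) (hs0 : s ≠ 0)
    (hsoc : ∀ i : Fin n, Ideal.Quotient.mk I (MvPolynomial.X i) * s = 0) :
    ¬ WLP K I :=
  stmt1_general I hArt d hdmin e he s hs hs0 hsoc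
end

section
/- Let A be an Artinian standard graded K-algebra, ℓ a general linear form, and d ≥ 0 an integer such that: (a) ×ℓ : A_{d-2} → A_{d-1} is injective, (b) ×ℓ : A_{d-1} → A_d is surjective, and (c) A has no socle generators of degree less than d-2. Then A has the weak Lefschetz property. -/
open MvPolynomial

/-
Injectivity of `×ℓ` propagates downwards from degree `d - 2`: if `ℓ x = 0` with `x` of degree
`e < d - 2`, then each `X i * x` lies in degree `e + 1` and is killed by `ℓ`, hence vanishes by
induction, so `x` is a socle element and is zero. Surjectivity propagates upwards from degree
`d - 1`: since `A` is generated in degree one, `A_{e+2} = ∑ X i A_{e+1} = ∑ X i ℓ A_e ⊆ ℓ A_{e+1}`.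
-/

section GradedPieces

variable {K : Type*} [Field K] {n : ℕ} {I : Ideal (MvPolynomial (Fin n) K)}

lemma comp_of_neg {j : ℤ} (hj : j < 0) : comp K I j = ⊥ := by
  rw [comp, if_neg (not_le.mpr hj)]

lemma mem_comp {j : ℤ} (hj : 0 ≤ j) {x : MvPolynomial (Fin n) K ⧸ I} :
    x ∈ comp K I j ↔
      ∃ p : MvPolynomial (Fin n) K, p.IsHomogeneous j.toNat ∧ Ideal.Quotient.mk I p = x := by
  rw [comp, if_pos hj]
  simp [Submodule.mem_map, mem_homogeneousSubmodule]

lemma mul_mem_comp {q : MvPolynomial (Fin n) K} {c : ℕ} (hq : q.IsHomogeneous c)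
    {j : ℤ} {x : MvPolynomial (Fin n) K ⧸ I} (hx : x ∈ comp K I j) :
    Ideal.Quotient.mk I q * x ∈ comp K I (j + c) := by
  rcases lt_or_ge j 0 with hj | hj
  · rw [comp_of_neg hj, Submodule.mem_bot] at hx
    rw [hx, mul_zero]
    exact Submodule.zero_mem _
  obtain ⟨p, hp, rfl⟩ := (mem_comp hj).mp hx
  refine (mem_comp (by omega)).mpr ⟨q * p, ?_, map_mul _ _ _⟩
  rw [show (j + c).toNat = c + j.toNat by omega]
  exact hq.mul hp

lemma monomial_eq_X_mul_monomial {v : Fin n →₀ ℕ} {i : Fin n} (hi : v i ≠ 0) (a : K) :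
    monomial v a = X i * monomial (v - Finsupp.single i 1) a := by
  have hv : Finsupp.single i 1 + (v - Finsupp.single i 1) = v :=
    add_tsub_cancel_of_le (Finsupp.single_le_iff.mpr (Nat.one_le_iff_ne_zero.mpr hi))
  conv_lhs => rw [← hv, monomial_single_add, pow_one]

lemma comp_le_iSup_map_mulLeft_X {j : ℤ} (hj : 1 ≤ j) :
    comp K I j ≤ ⨆ i : Fin n,
      (comp K I (j - 1)).map (LinearMap.mulLeft K (Ideal.Quotient.mk I (X i))) := by
  intro x hx
  obtain ⟨p, hp, rfl⟩ := (mem_comp (by omega)).mp hx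
  rw [p.as_sum, map_sum]
  refine Submodule.sum_mem _ fun v hv => ?_
  have hdeg : v.degree = j.toNat := by
    rw [Finsupp.degree_eq_weight_one]
    exact hp (mem_support_iff.mp hv)
  obtain ⟨i, hi⟩ : ∃ i, v i ≠ 0 := by
    by_contra! h
    rw [show v = 0 from Finsupp.ext h, map_zero] at hdeg
    omega
  have hdeg' : (v - Finsupp.single i 1).degree = (j - 1).toNat := by
    have := map_add Finsupp.degree (v - Finsupp.single i 1) (Finsupp.single i 1)
    rw [tsub_add_cancel_of_le (Finsupp.single_le_iff.mpr (Nat.one_le_iff_ne_zero.mpr hi)),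
      Finsupp.degree_single] at this
    omega
  refine Submodule.mem_iSup_of_mem i (Submodule.mem_map.mpr
    ⟨Ideal.Quotient.mk I (monomial (v - Finsupp.single i 1) (coeff v p)), ?_, ?_⟩)
  · exact (mem_comp (by omega)).mpr ⟨_, isHomogeneous_monomial _ hdeg', rfl⟩
  · rw [LinearMap.mulLeft_apply, ← map_mul, ← monomial_eq_X_mul_monomial hi]

end GradedPieces

section Lefschetz

variable {K : Type*} [Field K] {n : ℕ} {I : Ideal (MvPolynomial (Fin n) K)}
  {ℓ : MvPolynomial (Fin n) K}

lemma mulLeft_injOn_comp_of_succ {e : ℤ}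
    (hinj : ∀ x ∈ comp K I (e + 1), Ideal.Quotient.mk I ℓ * x = 0 → x = 0)
    (hsoc : ∀ s ∈ comp K I e, (∀ i : Fin n, Ideal.Quotient.mk I (X i) * s = 0) → s = 0) :
    ∀ x ∈ comp K I e, Ideal.Quotient.mk I ℓ * x = 0 → x = 0 := by
  intro x hx hℓx
  refine hsoc x hx fun i => hinj _ (mul_mem_comp (isHomogeneous_X K i) hx) ?_
  rw [mul_left_comm, hℓx, mul_zero]

lemma mulLeft_surj_comp_succ {e : ℤ} (he : -1 ≤ e)
    (hsurj : comp K I (e + 1) ≤ (comp K I e).map (LinearMap.mulLeft K (Ideal.Quotient.mk I ℓ))) :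
    comp K I (e + 1 + 1) ≤
      (comp K I (e + 1)).map (LinearMap.mulLeft K (Ideal.Quotient.mk I ℓ)) := by
  refine (comp_le_iSup_map_mulLeft_X (by omega)).trans (iSup_le fun i => ?_)
  rintro _ ⟨y, hy, rfl⟩
  rw [add_sub_cancel_right] at hy
  obtain ⟨z, hz, rfl⟩ := hsurj hy
  refine ⟨Ideal.Quotient.mk I (X i) * z, ?_, ?_⟩
  · simpa [add_comm] using mul_mem_comp (isHomogeneous_X K i) hz
  · simp only [LinearMap.mulLeft_apply]
    ring

end Lefschetz

theorem stmt2_general {K : Type*} [Field K] {n : ℕ} (I : Ideal (MvPolynomial (Fin n) K))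
    (ℓ : MvPolynomial (Fin n) K) (hℓ : ℓ.IsHomogeneous 1)
    (d : ℤ) (hd : 0 ≤ d)
    (hinj : ∀ x ∈ comp K I (d - 2), Ideal.Quotient.mk I ℓ * x = 0 → x = 0)
    (hsurj : comp K I d ≤ (comp K I (d - 1)).map (LinearMap.mulLeft K (Ideal.Quotient.mk I ℓ)))
    (hsoc : ∀ e : ℤ, e < d - 2 → ∀ s ∈ comp K I e,
      (∀ i : Fin n, Ideal.Quotient.mk I (MvPolynomial.X i) * s = 0) → s = 0) :
    WLP K I := by
  refine ⟨ℓ, hℓ, fun j => ?_⟩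
  rcases lt_or_ge j (d - 1) with hj | hj
  · left
    refine Int.leInductionDown (m := d - 2) hinj (fun e he ih => ?_) j (by omega)
    exact mulLeft_injOn_comp_of_succ (by rwa [sub_add_cancel]) (hsoc _ (by omega))
  · right
    refine Int.leInduction (m := d - 1) (by rwa [sub_add_cancel]) (fun e he ih => ?_) j hj
    exact mulLeft_surj_comp_succ (by omega) ih

/-- **Proposition (wlp (iii)).** Let `A = R/I` be an Artinian standard graded `K`-algebra,
`ℓ` a (general) linear form and `d ≥ 0` an integer such that
(a) `×ℓ : A_{d-2} → A_{d-1}` is injective, (b) `×ℓ : A_{d-1} → A_d` is surjective, and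
(c) `A` has no socle generators of degree less than `d - 2`.
Then `A` has the weak Lefschetz property. -/
theorem stmt2 {K : Type*} [Field K] {n : ℕ} (I : Ideal (MvPolynomial (Fin n) K))
    (hhom : ∀ p ∈ I, ∀ j : ℕ, MvPolynomial.homogeneousComponent j p ∈ I)
    (hArt : Module.Finite K (MvPolynomial (Fin n) K ⧸ I))
    (ℓ : MvPolynomial (Fin n) K) (hℓ : ℓ.IsHomogeneous 1)
    (d : ℤ) (hd : 0 ≤ d)
    (hinj : ∀ x ∈ comp K I (d - 2), Ideal.Quotient.mk I ℓ * x = 0 → x = 0)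
    (hsurj : comp K I d ≤ (comp K I (d - 1)).map (LinearMap.mulLeft K (Ideal.Quotient.mk I ℓ)))
    (hsoc : ∀ e : ℤ, e < d - 2 → ∀ s ∈ comp K I e,
      (∀ i : Fin n, Ideal.Quotient.mk I (MvPolynomial.X i) * s = 0) → s = 0) :
    WLP K I :=
  stmt2_general I ℓ hℓ d hd hinj hsurj hsoc
end

section
/- Let I be a monomial ideal in R = K[x_1,...,x_n] with K infinite and A = R/I Artinian, and fix integers d and e > 0. Then the multiplication map ×ℓ^e : A_{d-e} → A_d has maximal rank for a general linear form ℓ if and only if the multiplication map ×(x_1 + ... + x_n)^e : A_{d-e} → A_d has maximal rank. -/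
open MvPolynomial

/-- `I` is a monomial ideal: with every polynomial it contains all monomials of its support. -/
def IsMonomialIdeal {K : Type*} [Field K] {n : ℕ} (I : Ideal (MvPolynomial (Fin n) K)) : Prop :=
  ∀ p ∈ I, ∀ m ∈ p.support, MvPolynomial.monomial m (1 : K) ∈ I

/-- `×ℓᵉ : A_{d-e} → A_d` has maximal rank (injective or surjective). -/
def maxRankPow (K : Type*) [Field K] {n : ℕ} (I : Ideal (MvPolynomial (Fin n) K))
    (ℓ : MvPolynomial (Fin n) K) (d : ℤ) (e : ℕ) : Prop :=
  (∀ x ∈ comp K I (d - e), (Ideal.Quotient.mk I ℓ) ^ e * x = 0 → x = 0) ∨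
  (comp K I d ≤ (comp K I (d - e)).map (LinearMap.mulLeft K ((Ideal.Quotient.mk I ℓ) ^ e)))

/-! Maximal rank of `×ℓᵉ` is a Zariski-open condition on the coefficients `a` of `ℓ = ∑ aᵢ xᵢ`:
composing with a one-sided inverse of the map at a good `ℓ₀`, it is the non-vanishing of a
determinant that is a polynomial in `a`. A nonempty open set meets the torus `(Kˣ)ⁿ`, and for
`a ∈ (Kˣ)ⁿ` the rescaling `xᵢ ↦ aᵢ⁻¹ xᵢ` is a graded automorphism of `R` preserving the monomial
ideal `I`; it carries `∑ aᵢ xᵢ` to `x₁ + ⋯ + xₙ` and therefore transfers maximal rank. -/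

namespace MvPolynomial

variable {σ R : Type*} [CommSemiring R]

noncomputable def scaleVars (a : σ → R) : MvPolynomial σ R →ₐ[R] MvPolynomial σ R :=
  aeval fun i => a i • X i

@[simp]
lemma scaleVars_X (a : σ → R) (i : σ) : scaleVars a (X i) = a i • X i :=
  aeval_X _ _

lemma scaleVars_comp_scaleVars (a b : σ → R) :
    (scaleVars b).comp (scaleVars a) = scaleVars (a * b) :=
  algHom_ext fun i => by simp [smul_smul]

lemma scaleVars_one : scaleVars (1 : σ → R) = AlgHom.id R _ :=
  algHom_ext fun i => by simp

lemma scaleVars_monomial (a : σ → R) (m : σ →₀ ℕ) (c : R) :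
    scaleVars a (monomial m c) = monomial m (c * m.prod fun i k => a i ^ k) := by
  rw [scaleVars, aeval_monomial, monomial_eq, Finsupp.prod, Finsupp.prod, Finsupp.prod]
  simp only [algebraMap_eq, smul_eq_C_mul, mul_pow, Finset.prod_mul_distrib, map_prod, map_pow,
    C_mul]
  ring

lemma coeff_scaleVars (a : σ → R) (p : MvPolynomial σ R) (m : σ →₀ ℕ) :
    coeff m (scaleVars a p) = coeff m p * m.prod fun i k => a i ^ k := by
  induction p using MvPolynomial.induction_on' with
  | monomial m' c =>
    classical
    rw [scaleVars_monomial, coeff_monomial, coeff_monomial]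
    split_ifs with h <;> simp [h]
  | add p q hp hq => simp [hp, hq, add_mul]

lemma support_scaleVars_subset (a : σ → R) (p : MvPolynomial σ R) :
    (scaleVars a p).support ⊆ p.support := fun m hm => by
  rw [mem_support_iff, coeff_scaleVars] at hm
  exact mem_support_iff.2 (left_ne_zero_of_mul hm)

lemma IsHomogeneous.scaleVars {p : MvPolynomial σ R} {j : ℕ} (hp : p.IsHomogeneous j)
    (a : σ → R) : (scaleVars a p).IsHomogeneous j :=
  fun _ hm => hp (mem_support_iff.1 (support_scaleVars_subset a p (mem_support_iff.2 hm)))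

noncomputable def scaleVarsEquiv (u : σ → Rˣ) : MvPolynomial σ R ≃ₐ[R] MvPolynomial σ R :=
  AlgEquiv.ofAlgHom (scaleVars fun i => (u i : R)) (scaleVars fun i => ((u i)⁻¹ : Rˣ))
    (by rw [scaleVars_comp_scaleVars, ← scaleVars_one]; congr; ext; simp)
    (by rw [scaleVars_comp_scaleVars, ← scaleVars_one]; congr; ext; simp)

lemma map_scaleVarsEquiv_homogeneousSubmodule (u : σ → Rˣ) (j : ℕ) :
    (homogeneousSubmodule σ R j).map (scaleVarsEquiv u).toLinearMap = homogeneousSubmodule σ R j :=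
  le_antisymm (Submodule.map_le_iff_le_comap.2 fun _ hp => IsHomogeneous.scaleVars hp _)
    fun p hp => ⟨(scaleVarsEquiv u).symm p, IsHomogeneous.scaleVars hp _,
      (scaleVarsEquiv u).apply_symm_apply p⟩

lemma IsHomogeneous.exists_eq_sum_smul_X [Fintype σ] {p : MvPolynomial σ R}
    (hp : p.IsHomogeneous 1) : ∃ c : σ → R, p = ∑ i, c i • X i := by
  rw [← mem_homogeneousSubmodule, homogeneousSubmodule_one_eq_span_X,
    Submodule.mem_span_range_iff_exists_fun] at hp
  exact hp.imp fun _ h => h.symm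

end MvPolynomial

section MaxRank

variable {K A B : Type*} [CommRing K] [Ring A] [Algebra K A] [Ring B] [Algebra K B]

def HasMaxRankOn (t : A) (V W : Submodule K A) : Prop :=
  (∀ x ∈ V, t * x = 0 → x = 0) ∨ W ≤ V.map (LinearMap.mulLeft K t)

lemma HasMaxRankOn.map_algEquiv {t : A} {V W : Submodule K A} (h : HasMaxRankOn t V W)
    (Φ : A ≃ₐ[K] B) :
    HasMaxRankOn (Φ t) (V.map Φ.toLinearMap) (W.map Φ.toLinearMap) := by
  rcases h with hinj | hsurj
  · refine .inl ?_
    rintro _ ⟨x, hx, rfl⟩ htx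
    rw [AlgEquiv.toLinearMap_apply, ← map_mul, map_eq_zero_iff _ Φ.injective] at htx
    simp [hinj x hx htx]
  · refine .inr ?_
    rintro _ ⟨w, hw, rfl⟩
    obtain ⟨x, hx, rfl⟩ := hsurj hw
    exact ⟨Φ x, ⟨x, hx, rfl⟩, by simp⟩

lemma hasMaxRankOn_iff_injective_or_surjective {t : A} {V W : Submodule K A} (T : V →ₗ[K] W)
    (hT : ∀ x, (T x : A) = t * x) :
    HasMaxRankOn t V W ↔ Function.Injective T ∨ Function.Surjective T := by
  refine or_congr ⟨fun h => ?_, fun h x hx htx => ?_⟩ ⟨fun h w => ?_, fun h w hw => ?_⟩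
  · refine (injective_iff_map_eq_zero T).2 fun x hx => Subtype.ext (h x x.2 ?_)
    rw [← hT, hx, ZeroMemClass.coe_zero]
  · simpa using h (a₁ := ⟨x, hx⟩) (a₂ := 0) (Subtype.ext (by simp [hT, htx]))
  · obtain ⟨x, hx, htx⟩ := h w.2
    exact ⟨⟨x, hx⟩, Subtype.ext (by simpa [hT] using htx)⟩
  · obtain ⟨x, hx⟩ := h ⟨w, hw⟩
    exact ⟨x, x.2, by simp [← hT, hx]⟩

end MaxRank

section GeneralPoint

variable {K : Type*} [Field K] [Infinite K] {σ ι : Type*} [Fintype σ] [Fintype ι]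

lemma MvPolynomial.exists_forall_ne_zero_eval_ne_zero {P : MvPolynomial σ K} (hP : P ≠ 0) :
    ∃ a : σ → K, (∀ i, a i ≠ 0) ∧ eval a P ≠ 0 := by
  have hQ : P * ∏ i, X i ≠ 0 := mul_ne_zero hP (Finset.prod_ne_zero_iff.2 fun i _ => X_ne_zero i)
  obtain ⟨a, ha⟩ : ∃ a, eval a (P * ∏ i, X i) ≠ 0 := by
    by_contra! h
    exact hQ (funext fun a => by simp [h a])
  rw [map_mul, map_prod, mul_ne_zero_iff, Finset.prod_ne_zero_iff] at ha
  exact ⟨a, fun i => by simpa using ha.2 i (Finset.mem_univ i), ha.1⟩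

variable {V W : Type*} [AddCommGroup V] [Module K V] [AddCommGroup W] [Module K W]

lemma exists_isUnit_sum_eval_smul [FiniteDimensional K V] (g : ι → MvPolynomial σ K)
    (S : ι → Module.End K V) {a₀ : σ → K} (h : IsUnit (∑ i, eval a₀ (g i) • S i)) :
    ∃ a : σ → K, (∀ j, a j ≠ 0) ∧ IsUnit (∑ i, eval a (g i) • S i) := by
  let b := Module.finBasis K V
  let P : MvPolynomial σ K := (∑ i, g i • (LinearMap.toMatrix b b (S i)).map C).det
  have hP : ∀ a, eval a P = LinearMap.det (∑ i, eval a (g i) • S i) := fun a => by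
    rw [← LinearMap.det_toMatrix b, RingHom.map_det]
    congr 1
    ext
    simp [Matrix.sum_apply]
  simp only [LinearMap.isUnit_iff_isUnit_det, isUnit_iff_ne_zero, ← hP] at h ⊢
  exact MvPolynomial.exists_forall_ne_zero_eval_ne_zero fun h0 => h (by rw [h0, map_zero])

lemma exists_injective_sum_eval_smul [FiniteDimensional K V] (g : ι → MvPolynomial σ K)
    (S : ι → V →ₗ[K] W) {a₀ : σ → K} (h : Function.Injective ⇑(∑ i, eval a₀ (g i) • S i)) :
    ∃ a : σ → K, (∀ j, a j ≠ 0) ∧ Function.Injective ⇑(∑ i, eval a (g i) • S i) := by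
  obtain ⟨π, hπ⟩ := LinearMap.exists_leftInverse_of_injective _ (LinearMap.ker_eq_bot.2 h)
  have hcomp : ∀ a : σ → K, π ∘ₗ (∑ i, eval a (g i) • S i) = ∑ i, eval a (g i) • (π ∘ₗ S i) :=
    fun a => by ext; simp
  obtain ⟨a, ha, hunit⟩ := exists_isUnit_sum_eval_smul g (fun i => π ∘ₗ S i)
    (a₀ := a₀) (by rw [← hcomp, hπ]; exact isUnit_one)
  refine ⟨a, ha, Function.Injective.of_comp (f := π) ?_⟩
  rw [← LinearMap.coe_comp, hcomp]
  exact (Module.End.isUnit_iff _).1 hunit |>.injective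

lemma exists_surjective_sum_eval_smul [FiniteDimensional K W] (g : ι → MvPolynomial σ K)
    (S : ι → V →ₗ[K] W) {a₀ : σ → K} (h : Function.Surjective ⇑(∑ i, eval a₀ (g i) • S i)) :
    ∃ a : σ → K, (∀ j, a j ≠ 0) ∧ Function.Surjective ⇑(∑ i, eval a (g i) • S i) := by
  obtain ⟨s, hs⟩ := LinearMap.exists_rightInverse_of_surjective _ (LinearMap.range_eq_top.2 h)
  have hcomp : ∀ a : σ → K, (∑ i, eval a (g i) • S i) ∘ₗ s = ∑ i, eval a (g i) • (S i ∘ₗ s) :=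
    fun a => by ext; simp
  obtain ⟨a, ha, hunit⟩ := exists_isUnit_sum_eval_smul g (fun i => S i ∘ₗ s)
    (a₀ := a₀) (by rw [← hcomp, hs]; exact isUnit_one)
  refine ⟨a, ha, Function.Surjective.of_comp (g := s) ?_⟩
  rw [← LinearMap.coe_comp, hcomp]
  exact (Module.End.isUnit_iff _).1 hunit |>.surjective

lemma HasMaxRankOn.exists_sum_eval_smul {A : Type*} [Ring A] [Algebra K A]
    {V W : Submodule K A} [FiniteDimensional K V] [FiniteDimensional K W]
    (g : ι → MvPolynomial σ K) (v : ι → A) (hv : ∀ i, ∀ x ∈ V, v i * x ∈ W) {a₀ : σ → K}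
    (h : HasMaxRankOn (∑ i, eval a₀ (g i) • v i) V W) :
    ∃ a : σ → K, (∀ j, a j ≠ 0) ∧ HasMaxRankOn (∑ i, eval a (g i) • v i) V W := by
  let S : ι → V →ₗ[K] W := fun i => (LinearMap.mulLeft K (v i)).restrict (hv i)
  have hS : ∀ (a : σ → K) (x : V),
      ((∑ i, eval a (g i) • S i) x : A) = (∑ i, eval a (g i) • v i) * x := fun a x => by
    simp only [LinearMap.coe_sum, LinearMap.coe_smul, Finset.sum_apply, Pi.smul_apply,
      AddSubmonoidClass.coe_finsetSum, SetLike.val_smul, Finset.sum_mul, Algebra.smul_mul_assoc, S]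
    rfl
  rw [hasMaxRankOn_iff_injective_or_surjective _ (hS a₀)] at h
  rcases h with hinj | hsurj
  · obtain ⟨a, ha, hinj⟩ := exists_injective_sum_eval_smul g S hinj
    exact ⟨a, ha, (hasMaxRankOn_iff_injective_or_surjective _ (hS a)).2 (.inl hinj)⟩
  · obtain ⟨a, ha, hsurj⟩ := exists_surjective_sum_eval_smul g S hsurj
    exact ⟨a, ha, (hasMaxRankOn_iff_injective_or_surjective _ (hS a)).2 (.inr hsurj)⟩

end GeneralPoint

section MonomialQuotient

variable {K : Type*} [Field K] {n : ℕ} {I : Ideal (MvPolynomial (Fin n) K)}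

lemma IsMonomialIdeal.mem_of_support_subset (hI : IsMonomialIdeal I)
    {p q : MvPolynomial (Fin n) K} (hp : p ∈ I) (hq : q.support ⊆ p.support) : q ∈ I := by
  rw [q.as_sum]
  exact sum_mem fun m hm => by
    simpa [C_mul_monomial] using I.mul_mem_left (C (coeff m q)) (hI p hp m (hq hm))

lemma IsMonomialIdeal.map_scaleVarsEquiv (hI : IsMonomialIdeal I) (u : Fin n → Kˣ) :
    I.map (scaleVarsEquiv u : MvPolynomial (Fin n) K →+* MvPolynomial (Fin n) K) = I := by
  refine le_antisymm (Ideal.map_le_iff_le_comap.2 fun p hp =>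
    hI.mem_of_support_subset hp (support_scaleVars_subset _ p)) fun p hp => ?_
  rw [← (scaleVarsEquiv u).apply_symm_apply p]
  exact Ideal.mem_map_of_mem _ (hI.mem_of_support_subset hp (support_scaleVars_subset _ p))

noncomputable def IsMonomialIdeal.quotientScaleVarsEquiv (hI : IsMonomialIdeal I)
    (u : Fin n → Kˣ) : (MvPolynomial (Fin n) K ⧸ I) ≃ₐ[K] MvPolynomial (Fin n) K ⧸ I :=
  Ideal.quotientEquivAlg I I (scaleVarsEquiv u) (hI.map_scaleVarsEquiv u).symm

lemma IsMonomialIdeal.map_quotientScaleVarsEquiv_comp (hI : IsMonomialIdeal I) (u : Fin n → Kˣ)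
    (j : ℤ) : (comp K I j).map (hI.quotientScaleVarsEquiv u).toLinearMap = comp K I j := by
  unfold comp
  split_ifs
  · rw [← Submodule.map_comp]
    change Submodule.map
      ((Ideal.Quotient.mkₐ K I).toLinearMap ∘ₗ (scaleVarsEquiv u).toLinearMap) _ = _
    rw [Submodule.map_comp, map_scaleVarsEquiv_homogeneousSubmodule]
  · exact Submodule.map_bot _

instance (j : ℤ) : FiniteDimensional K (comp K I j) := by
  refine (Submodule.fg_iff_finiteDimensional _).1 ?_
  unfold comp
  split_ifs
  exacts [(homogeneousSubmodule_fg _ _ _).map _, Submodule.fg_bot]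

lemma mk_mul_mem_comp {q : MvPolynomial (Fin n) K} {e : ℕ} (hq : q.IsHomogeneous e) {j : ℤ}
    {x : MvPolynomial (Fin n) K ⧸ I} (hx : x ∈ comp K I j) :
    Ideal.Quotient.mk I q * x ∈ comp K I (j + e) := by
  by_cases hj : 0 ≤ j
  · obtain ⟨p, hp, rfl⟩ := (mem_comp hj).1 hx
    refine (mem_comp (by omega)).2 ⟨q * p, ?_, map_mul _ _ _⟩
    convert hq.mul hp using 1
    omega
  · rw [comp, if_neg hj, Submodule.mem_bot] at hx
    simp [hx]

lemma maxRankPow_iff_hasMaxRankOn (ℓ : MvPolynomial (Fin n) K) (d : ℤ) (e : ℕ) :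
    maxRankPow K I ℓ d e ↔
      HasMaxRankOn (Ideal.Quotient.mk I ℓ ^ e) (comp K I (d - e)) (comp K I d) :=
  Iff.rfl

lemma maxRankPow.scaleVars (hI : IsMonomialIdeal I) (u : Fin n → Kˣ)
    {ℓ : MvPolynomial (Fin n) K} {d : ℤ} {e : ℕ} (h : maxRankPow K I ℓ d e) :
    maxRankPow K I (scaleVars (fun i => (u i : K)) ℓ) d e := by
  have := ((maxRankPow_iff_hasMaxRankOn ℓ d e).1 h).map_algEquiv (hI.quotientScaleVarsEquiv u)
  rwa [hI.map_quotientScaleVarsEquiv_comp, hI.map_quotientScaleVarsEquiv_comp, map_pow] at this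

lemma mk_sum_smul_X_pow (a : Fin n → K) (e : ℕ) :
    Ideal.Quotient.mk I (∑ i, a i • X i) ^ e =
      ∑ f : Fin e → Fin n, eval a (∏ k, X (f k)) • Ideal.Quotient.mk I (∏ k, X (f k)) := by
  rw [← map_pow, Finset.sum_pow', Fintype.piFinset_univ, ← Ideal.Quotient.mkₐ_eq_mk K, map_sum]
  simp [Finset.prod_smul]

variable {d : ℤ} {e : ℕ}

lemma maxRankPow.exists_sum_smul_X [Infinite K] {a₀ : Fin n → K}
    (h : maxRankPow K I (∑ i, a₀ i • X i) d e) :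
    ∃ a : Fin n → K, (∀ i, a i ≠ 0) ∧ maxRankPow K I (∑ i, a i • X i) d e := by
  simp only [maxRankPow_iff_hasMaxRankOn, mk_sum_smul_X_pow] at h ⊢
  refine h.exists_sum_eval_smul _ _ fun f x hx => ?_
  have hf : (∏ k, X (f k) : MvPolynomial (Fin n) K).IsHomogeneous e := by
    simpa using IsHomogeneous.prod Finset.univ _ (fun _ => 1) fun k _ => isHomogeneous_X K (f k)
  simpa using mk_mul_mem_comp hf hx

lemma maxRankPow.sum_X_of_sum_smul_X (hI : IsMonomialIdeal I) {a : Fin n → K}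
    (ha : ∀ i, a i ≠ 0) (h : maxRankPow K I (∑ i, a i • X i) d e) :
    maxRankPow K I (∑ i, X i) d e := by
  convert h.scaleVars hI fun i => (Units.mk0 (a i) (ha i))⁻¹
  simp [smul_smul, ha]

end MonomialQuotient

theorem stmt4_general {K : Type*} [Field K] [Infinite K] {n : ℕ}
    (I : Ideal (MvPolynomial (Fin n) K)) (hmono : IsMonomialIdeal I)
    (d : ℤ) (e : ℕ) :
    (∃ ℓ : MvPolynomial (Fin n) K, ℓ.IsHomogeneous 1 ∧ maxRankPow K I ℓ d e) ↔
      maxRankPow K I (∑ i : Fin n, MvPolynomial.X i) d e := by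
  refine ⟨fun ⟨ℓ, hℓ, hmax⟩ => ?_,
    fun h => ⟨_, IsHomogeneous.sum _ _ _ fun i _ => isHomogeneous_X K i, h⟩⟩
  obtain ⟨c, rfl⟩ := hℓ.exists_eq_sum_smul_X
  obtain ⟨a, ha, hmax⟩ := hmax.exists_sum_smul_X
  exact hmax.sum_X_of_sum_smul_X hmono ha

/-- **Proposition (mono).** For an Artinian monomial algebra `A = R/I` over an infinite field,
`×ℓᵉ : A_{d-e} → A_d` has maximal rank for a general linear form `ℓ` if and only if
`×(x₁+⋯+xₙ)ᵉ : A_{d-e} → A_d` has maximal rank. -/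
theorem stmt4 {K : Type*} [Field K] [Infinite K] {n : ℕ}
    (I : Ideal (MvPolynomial (Fin n) K)) (hmono : IsMonomialIdeal I)
    (hArt : Module.Finite K (MvPolynomial (Fin n) K ⧸ I))
    (d : ℤ) (e : ℕ) (he : 0 < e) :
    (∃ ℓ : MvPolynomial (Fin n) K, ℓ.IsHomogeneous 1 ∧ maxRankPow K I ℓ d e) ↔
      maxRankPow K I (∑ i : Fin n, MvPolynomial.X i) d e :=
  stmt4_general I hmono d e
end

section
/- Let A = R/I be an Artinian algebra with I a monomial ideal in R = K[x_1,...,x_n], K infinite. Then the following are equivalent: (i) A has the weak Lefschetz property in characteristic zero; (ii) A has the weak Lefschetz property over some field of positive characteristic; (iii) A has the weak Lefschetz property over every field of sufficiently large positive characteristic. -/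
open MvPolynomial

/-- The monomial ideal generated by the monomials with exponent vectors in `S`. -/
noncomputable def monIdeal (K : Type) [Field K] (n : ℕ) (S : Set (Fin n →₀ ℕ)) :
    Ideal (MvPolynomial (Fin n) K) :=
  Ideal.span ((fun s => MvPolynomial.monomial s (1 : K)) '' S)

/-!
The classes of the standard monomials (those outside the ideal) of degree `d` form a basis of
`A_d`, and in these bases multiplication by `ℓ = ∑ aᵢ xᵢ : A_d → A_{d+1}` has the matrix `M(a)`
with entry `aᵢ` at `(m', m)` when `x^{m'} = xᵢ x^m`. Over `K[x]`, `M(x)` times the diagonal of the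
column monomials is the diagonal of the row monomials times `M(1)`, so a maximal minor of `M(a)`
vanishes whenever the same minor of the `0/1` matrix `M(1)` does. Hence the WLP holds over `K` iff
in every degree some maximal minor of the integer matrix `M(1)` is nonzero in `K`. As `A` is
Artinian only finitely many degrees matter, so the WLP in characteristic zero can fail only in the
characteristics dividing finitely many nonzero integers, while a minor that is nonzero in
characteristic `p` is a nonzero integer.
-/

open scoped Matrix

namespace Matrix

open Function

theorem det_mul_prod_eq_prod_mul_det {R ι : Type*} [CommRing R] [Fintype ι] [DecidableEq ι]
    {A B : Matrix ι ι R} {v w : ι → R} (h : ∀ i j, A i j * w j = v i * B i j) :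
    A.det * ∏ j, w j = (∏ i, v i) * B.det := by
  have : A * diagonal w = diagonal v * B := by
    ext i j
    rw [mul_diagonal, diagonal_mul, h]
  simpa only [det_mul, det_diagonal] using congrArg det this

variable {K : Type*} [Field K] {m n : Type*}

theorem det_submatrix_map_intCast {γ : Type*} [Fintype γ] [DecidableEq γ] (A : Matrix m n ℤ)
    (r : γ → m) (c : γ → n) :
    ((A.map (Int.cast : ℤ → K)).submatrix r c).det = ((A.submatrix r c).det : K) := by
  rw [Int.cast_det, submatrix_map]

def HasMaxRank [Fintype n] (M : Matrix m n K) : Prop :=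
  Injective M.mulVec ∨ Surjective M.mulVec

theorem hasMaxRank_of_isEmpty [Fintype n] [IsEmpty m] (M : Matrix m n K) : M.HasMaxRank :=
  Or.inr fun _ => ⟨0, Subsingleton.elim _ _⟩

variable [Fintype m] [Fintype n]

theorem exists_det_submatrix_ne_zero_of_linearIndependent_col [DecidableEq n] {M : Matrix m n K}
    (h : LinearIndependent K M.col) : ∃ s : n → m, (M.submatrix s id).det ≠ 0 := by
  have hrows : Submodule.span K (Set.range M.row) = ⊤ := by
    refine Submodule.eq_top_of_finrank_eq ?_
    rw [← rank_eq_finrank_span_row, ← rank_transpose, LinearIndependent.rank_matrix h,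
      Module.finrank_fintype_fun_eq_card]
  obtain ⟨κ, a, -, hspan, hli⟩ := exists_linearIndependent' K M.row
  let e : κ ≃ n := (Module.Basis.mk hli (by rw [hspan, hrows])).indexEquiv (Pi.basisFun K n)
  refine ⟨a ∘ e.symm, fun h0 => ?_⟩
  have : LinearIndependent K (M.submatrix (a ∘ e.symm) id).row := hli.comp _ e.symm.injective
  rw [linearIndependent_rows_iff_isUnit, isUnit_iff_isUnit_det, h0] at this
  exact not_isUnit_zero this

theorem injective_mulVec_iff_exists_det_submatrix_ne_zero [DecidableEq n] (M : Matrix m n K) :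
    Injective M.mulVec ↔ ∃ s : n → m, (M.submatrix s id).det ≠ 0 := by
  refine ⟨fun h => exists_det_submatrix_ne_zero_of_linearIndependent_col
    (mulVec_injective_iff.1 h), fun ⟨s, hs⟩ => ?_⟩
  have : Injective (M.submatrix s id).mulVec :=
    mulVec_injective_iff_isUnit.2 ((isUnit_iff_isUnit_det _).2 hs.isUnit)
  exact Injective.of_comp (f := fun v => v ∘ s) this

theorem surjective_mulVec_iff_exists_det_submatrix_ne_zero [DecidableEq m] (M : Matrix m n K) :
    Surjective M.mulVec ↔ ∃ t : m → n, (M.submatrix id t).det ≠ 0 := by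
  classical
  constructor
  · intro h
    obtain ⟨B, hB⟩ := mulVec_surjective_iff_exists_right_inverse.1 h
    have hinj : Injective M.vecMul := fun x y hxy => by
      simpa [vecMul_vecMul, hB] using congrArg (· ᵥ* B) hxy
    obtain ⟨t, ht⟩ := exists_det_submatrix_ne_zero_of_linearIndependent_col
      (M := Mᵀ) (vecMul_injective_iff.1 hinj)
    exact ⟨t, by rwa [← transpose_submatrix, det_transpose] at ht⟩
  · rintro ⟨t, ht⟩
    have : Surjective (M.submatrix id t).mulVec :=
      mulVec_surjective_iff_isUnit.2 ((isUnit_iff_isUnit_det _).2 ht.isUnit)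
    have hfac : M * (1 : Matrix n n K).submatrix id t = M.submatrix id t :=
      mul_submatrix_one (Equiv.refl n) t M
    rw [← hfac] at this
    exact Surjective.of_comp (g := ((1 : Matrix n n K).submatrix id t).mulVec)
      (by simpa only [comp_def, mulVec_mulVec] using this)

theorem hasMaxRank_iff_exists_det_submatrix_ne_zero [DecidableEq m] [DecidableEq n]
    (M : Matrix m n K) :
    M.HasMaxRank ↔ (∃ s : n → m, (M.submatrix s id).det ≠ 0) ∨
      ∃ t : m → n, (M.submatrix id t).det ≠ 0 := by
  rw [HasMaxRank, injective_mulVec_iff_exists_det_submatrix_ne_zero,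
    surjective_mulVec_iff_exists_det_submatrix_ne_zero]

theorem HasMaxRank.exists_intCast_ne_zero {A : Matrix m n ℤ}
    (h : (A.map (Int.cast : ℤ → K)).HasMaxRank) :
    ∃ D : ℤ, (D : K) ≠ 0 ∧
      ∀ (L : Type*) [Field L], (D : L) ≠ 0 → (A.map (Int.cast : ℤ → L)).HasMaxRank := by
  classical
  simp only [hasMaxRank_iff_exists_det_submatrix_ne_zero, det_submatrix_map_intCast] at h ⊢
  rcases h with ⟨s, hs⟩ | ⟨t, ht⟩
  · exact ⟨_, hs, fun L _ hL => Or.inl ⟨s, hL⟩⟩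
  · exact ⟨_, ht, fun L _ hL => Or.inr ⟨t, hL⟩⟩

theorem HasMaxRank.map_intCast_of_charZero {A : Matrix m n ℤ}
    (h : (A.map (Int.cast : ℤ → K)).HasMaxRank) (L : Type*) [Field L] [CharZero L] :
    (A.map (Int.cast : ℤ → L)).HasMaxRank := by
  obtain ⟨D, hD, hA⟩ := h.exists_intCast_ne_zero
  exact hA L (Int.cast_ne_zero.2 fun h0 => hD (by rw [h0, Int.cast_zero]))

theorem HasMaxRank.exists_forall_charP [CharZero K] {A : Matrix m n ℤ}
    (h : (A.map (Int.cast : ℤ → K)).HasMaxRank) :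
    ∃ B : ℕ, ∀ p, B ≤ p → ∀ (L : Type*) [Field L] [CharP L p],
      (A.map (Int.cast : ℤ → L)).HasMaxRank := by
  obtain ⟨D, hD, hA⟩ := h.exists_intCast_ne_zero
  have hD0 : D ≠ 0 := fun h0 => hD (by rw [h0, Int.cast_zero])
  refine ⟨D.natAbs + 1, fun p hp L _ _ => hA L fun hDL => ?_⟩
  rw [CharP.intCast_eq_zero_iff L p, ← Int.natAbs_dvd_natAbs, Int.natAbs_natCast] at hDL
  have := Nat.le_of_dvd (Int.natAbs_pos.2 hD0) hDL
  omega

end Matrix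

section CommSquare

variable {R V V' W W' : Type*} [CommRing R] [AddCommGroup V] [AddCommGroup V']
  [AddCommGroup W] [AddCommGroup W'] [Module R V] [Module R V'] [Module R W] [Module R W']
  {φ : V →ₗ[R] W} {ψ : V' →ₗ[R] W'} {f : V →ₗ[R] V'} {g : W →ₗ[R] W'}

theorem LinearMap.injective_iff_of_comp_eq (hφ : Function.Injective φ)
    (hψ : Function.Injective ψ) (h : g ∘ₗ φ = ψ ∘ₗ f) :
    (∀ x ∈ range φ, g x = 0 → x = 0) ↔ Function.Injective f := by
  rw [← LinearMap.ker_eq_bot, LinearMap.ker_eq_bot']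
  simp only [LinearMap.mem_range, forall_exists_index, forall_apply_eq_imp_iff]
  refine forall_congr' fun v => ?_
  rw [← LinearMap.comp_apply, h, LinearMap.comp_apply, map_eq_zero_iff ψ hψ,
    map_eq_zero_iff φ hφ]

theorem LinearMap.surjective_iff_of_comp_eq (hψ : Function.Injective ψ)
    (h : g ∘ₗ φ = ψ ∘ₗ f) :
    range ψ ≤ (range φ).map g ↔ Function.Surjective f := by
  rw [← LinearMap.range_comp, h, LinearMap.range_comp, ← Submodule.map_top,
    Submodule.map_le_map_iff_of_injective hψ, top_le_iff, LinearMap.range_eq_top]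

end CommSquare

section MonomialQuotient

variable {n : ℕ}

abbrev StdMonomial (S : Set (Fin n →₀ ℕ)) (d : ℕ) : Type :=
  {m : Fin n →₀ ℕ // m.degree = d ∧ m ∉ upperClosure S}

instance (S : Set (Fin n →₀ ℕ)) (d : ℕ) : Finite (StdMonomial S d) :=
  ((Finsupp.finite_of_degree_le d).subset fun _ hm => hm.1.le).to_subtype

noncomputable instance (S : Set (Fin n →₀ ℕ)) (d : ℕ) : Fintype (StdMonomial S d) :=
  Fintype.ofFinite _

theorem exists_forall_isEmpty_stdMonomial {S : Set (Fin n →₀ ℕ)}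
    (hart : ∀ i, ∃ k, Finsupp.single i k ∈ S) :
    ∃ D, ∀ d ≥ D, IsEmpty (StdMonomial S d) := by
  choose k hk using hart
  refine ⟨∑ i, k i + 1, fun d hd => ⟨fun ⟨m, hdeg, hm⟩ => hm ?_⟩⟩
  by_contra hm
  have hlt : ∀ i, m i < k i := fun i =>
    not_le.1 fun hi => hm (mem_upperClosure.2 ⟨_, hk i, Finsupp.single_le_iff.2 hi⟩)
  have := Finset.sum_le_sum fun i (_ : i ∈ Finset.univ) => (hlt i).le
  rw [← Finsupp.degree_eq_sum, hdeg] at this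
  omega

section MonomialAlgebra

variable (K : Type) [Field K] (S : Set (Fin n →₀ ℕ))

noncomputable def monomialClass (m : Fin n →₀ ℕ) :
    MvPolynomial (Fin n) K ⧸ monIdeal K n S :=
  Ideal.Quotient.mk _ (monomial m 1)

variable {K S}

theorem monomialClass_eq_zero {m : Fin n →₀ ℕ} (hm : m ∈ upperClosure S) :
    monomialClass K S m = 0 := by
  rw [monomialClass, Ideal.Quotient.eq_zero_iff_mem, monIdeal, mem_ideal_span_monomial_image]
  intro m' hm'
  rw [Finset.mem_singleton.1 (support_monomial_subset hm')]
  exact mem_upperClosure.1 hm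

theorem monomialClass_eq_sum {d : ℕ} {m : Fin n →₀ ℕ} (hd : m.degree = d) :
    monomialClass K S m =
      ∑ m' : StdMonomial S d, if m = m'.1 then monomialClass K S m'.1 else 0 := by
  by_cases hm : m ∈ upperClosure S
  · rw [monomialClass_eq_zero hm, Finset.sum_eq_zero]
    rintro m' -
    exact if_neg fun (h : m = m'.1) => m'.2.2 (h ▸ hm)
  · rw [Finset.sum_eq_single ⟨m, hd, hm⟩
      (fun m' _ hne => if_neg fun h => hne (Subtype.ext h.symm)) (by simp), if_pos rfl]

theorem linearIndependent_monomialClass (d : ℕ) :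
    LinearIndependent K fun m : StdMonomial S d => monomialClass K S m.1 := by
  classical
  refine Fintype.linearIndependent_iff.2 fun c hc m₀ => ?_
  have hmem : ∑ m : StdMonomial S d, monomial m.1 (c m) ∈ monIdeal K n S := by
    rw [← Ideal.Quotient.eq_zero_iff_mem, map_sum, ← hc]
    refine Finset.sum_congr rfl fun m _ => ?_
    rw [monomialClass, ← Ideal.Quotient.mkₐ_eq_mk K, ← map_smul, smul_monomial, smul_eq_mul,
      mul_one]
  by_contra hne
  refine m₀.2.2 (mem_upperClosure.2 (mem_ideal_span_monomial_image.1 hmem m₀.1 ?_))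
  rw [mem_support_iff, coeff_sum]
  simpa [coeff_monomial, Subtype.coe_inj] using hne

theorem comp_natCast_eq_span (d : ℕ) :
    comp K (monIdeal K n S) d =
      Submodule.span K (Set.range fun m : StdMonomial S d => monomialClass K S m.1) := by
  rw [comp, if_pos (Int.natCast_nonneg d), Int.toNat_natCast,
    homogeneousSubmodule_eq_finsupp_supported, AddMonoidAlgebra.supported_eq_span_single,
    Submodule.map_span, ← Set.image_comp]
  apply le_antisymm
  · rw [Submodule.span_le]
    rintro _ ⟨m, hdeg, rfl⟩
    change monomialClass K S m ∈ _
    rw [monomialClass_eq_sum hdeg]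
    exact Submodule.sum_mem _ fun m' _ => by
      split_ifs
      exacts [Submodule.subset_span ⟨m', rfl⟩, Submodule.zero_mem _]
  · rw [Submodule.span_le]
    rintro _ ⟨m, rfl⟩
    exact Submodule.subset_span ⟨m.1, m.2.1, rfl⟩

end MonomialAlgebra

section LefschetzMatrix

variable (S : Set (Fin n →₀ ℕ))

noncomputable def lefschetzMatrix (R : Type*) [CommRing R] (u : Fin n → R) (d : ℕ) :
    Matrix (StdMonomial S (d + 1)) (StdMonomial S d) R :=
  Matrix.of fun m' m => ∑ i, if m.1 + Finsupp.single i 1 = m'.1 then u i else 0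

variable {S}

theorem lefschetzMatrix_map {R R' : Type*} [CommRing R] [CommRing R'] (f : R →+* R')
    (u : Fin n → R) (d : ℕ) :
    (lefschetzMatrix S R u d).map f = lefschetzMatrix S R' (f ∘ u) d := by
  ext m' m
  simp only [lefschetzMatrix, Matrix.map_apply, Matrix.of_apply, map_sum, apply_ite f, map_zero,
    Function.comp_apply]

theorem lefschetzMatrix_one_map {R R' : Type*} [CommRing R] [CommRing R'] (f : R →+* R')
    (d : ℕ) : (lefschetzMatrix S R 1 d).map f = lefschetzMatrix S R' 1 d := by
  rw [lefschetzMatrix_map]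
  exact congrArg (lefschetzMatrix S R' · d) (funext fun _ => map_one f)

theorem lefschetzMatrix_X_mul_monomial (K : Type*) [Field K] {d : ℕ} (m' : StdMonomial S (d + 1))
    (m : StdMonomial S d) :
    lefschetzMatrix S (MvPolynomial (Fin n) K) X d m' m * monomial m.1 1
      = monomial m'.1 1 * lefschetzMatrix S (MvPolynomial (Fin n) K) 1 d m' m := by
  simp only [lefschetzMatrix, Matrix.of_apply, Finset.sum_mul, Finset.mul_sum]
  refine Finset.sum_congr rfl fun i _ => ?_
  split_ifs with h
  · rw [← h, X, monomial_mul, Pi.one_apply, mul_one, mul_one, add_comm]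
  · simp

end LefschetzMatrix

section Lefschetz

variable {K : Type} [Field K] {S : Set (Fin n →₀ ℕ)}

variable (K S) in
noncomputable def stdCoords (d : ℕ) :
    (StdMonomial S d → K) →ₗ[K] MvPolynomial (Fin n) K ⧸ monIdeal K n S :=
  Fintype.linearCombination K fun m => monomialClass K S m.1

theorem range_stdCoords (d : ℕ) :
    LinearMap.range (stdCoords K S d) = comp K (monIdeal K n S) d := by
  rw [stdCoords, Fintype.range_linearCombination, comp_natCast_eq_span]

theorem injective_stdCoords (d : ℕ) : Function.Injective (stdCoords K S d) :=
  (linearIndependent_monomialClass d).fintypeLinearCombination_injective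

theorem mk_X_mul_monomialClass (i : Fin n) (m : Fin n →₀ ℕ) :
    Ideal.Quotient.mk (monIdeal K n S) (X i) * monomialClass K S m =
      monomialClass K S (m + Finsupp.single i 1) := by
  rw [monomialClass, monomialClass, ← map_mul, X, monomial_mul, one_mul, add_comm]

theorem mk_linearForm_mul_monomialClass (a : Fin n → K) (m : Fin n →₀ ℕ) :
    Ideal.Quotient.mk (monIdeal K n S) (∑ i, a i • X i) * monomialClass K S m =
      ∑ i, a i • monomialClass K S (m + Finsupp.single i 1) := by
  simp only [← Ideal.Quotient.mkₐ_eq_mk K, map_sum, map_smul, Finset.sum_mul, smul_mul_assoc]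
  simp only [Ideal.Quotient.mkₐ_eq_mk, mk_X_mul_monomialClass]

theorem mk_linearForm_mul_stdCoords (a : Fin n → K) (d : ℕ) (c : StdMonomial S d → K) :
    Ideal.Quotient.mk (monIdeal K n S) (∑ i, a i • X i) * stdCoords K S d c =
      stdCoords K S (d + 1) (lefschetzMatrix S K a d *ᵥ c) := by
  have hshift (m : StdMonomial S d) (i : Fin n) :
      monomialClass K S (m.1 + Finsupp.single i 1) = ∑ m' : StdMonomial S (d + 1),
        if m.1 + Finsupp.single i 1 = m'.1 then monomialClass K S m'.1 else 0 :=
    monomialClass_eq_sum (by rw [map_add, m.2.1, Finsupp.degree_single])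
  simp only [stdCoords, Fintype.linearCombination_apply, Finset.mul_sum, mul_smul_comm,
    mk_linearForm_mul_monomialClass, hshift, Finset.smul_sum, smul_ite, smul_zero, smul_smul,
    lefschetzMatrix, Matrix.mulVec, dotProduct, Matrix.of_apply, Finset.sum_mul, Finset.sum_smul,
    ite_mul, zero_mul, ite_smul, zero_smul]
  conv_rhs => rw [Finset.sum_comm]
  refine Finset.sum_congr rfl fun m _ => ?_
  rw [Finset.sum_comm]
  simp only [mul_comm]

theorem wlp_degree_iff_hasMaxRank (a : Fin n → K) (d : ℕ) :
    ((∀ x ∈ comp K (monIdeal K n S) d,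
        Ideal.Quotient.mk (monIdeal K n S) (∑ i, a i • X i) * x = 0 → x = 0) ∨
      comp K (monIdeal K n S) (d + 1 : ℤ) ≤ (comp K (monIdeal K n S) d).map
        (LinearMap.mulLeft K (Ideal.Quotient.mk (monIdeal K n S) (∑ i, a i • X i)))) ↔
    (lefschetzMatrix S K a d).HasMaxRank := by
  have hsq : LinearMap.mulLeft K (Ideal.Quotient.mk (monIdeal K n S) (∑ i, a i • X i)) ∘ₗ
      stdCoords K S d = stdCoords K S (d + 1) ∘ₗ (lefschetzMatrix S K a d).mulVecLin :=
    LinearMap.ext (mk_linearForm_mul_stdCoords a d)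
  rw [← range_stdCoords, ← Nat.cast_succ, ← range_stdCoords]
  exact Iff.or
    (LinearMap.injective_iff_of_comp_eq (injective_stdCoords d) (injective_stdCoords _) hsq)
    (LinearMap.surjective_iff_of_comp_eq (injective_stdCoords _) hsq)

theorem det_submatrix_lefschetzMatrix_eq_zero {γ : Type*} [Fintype γ] [DecidableEq γ] {d : ℕ}
    (s : γ → StdMonomial S (d + 1)) (t : γ → StdMonomial S d) (a : Fin n → K)
    (h : ((lefschetzMatrix S K 1 d).submatrix s t).det = 0) :
    ((lefschetzMatrix S K a d).submatrix s t).det = 0 := by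
  have hX := Matrix.det_mul_prod_eq_prod_mul_det
    (A := (lefschetzMatrix S _ X d).submatrix s t) (B := (lefschetzMatrix S _ 1 d).submatrix s t)
    fun r c => lefschetzMatrix_X_mul_monomial K (s r) (t c)
  have hC : ((lefschetzMatrix S (MvPolynomial (Fin n) K) 1 d).submatrix s t).det =
      C ((lefschetzMatrix S K 1 d).submatrix s t).det := by
    rw [RingHom.map_det, RingHom.mapMatrix_apply, ← Matrix.submatrix_map,
      lefschetzMatrix_one_map]
  have hmono : ∏ c, monomial (t c).1 (1 : K) ≠ 0 :=
    Finset.prod_ne_zero_iff.2 fun c _ => by simp [monomial_eq_zero]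
  rw [hC, h, map_zero, mul_zero, mul_eq_zero, or_iff_left hmono] at hX
  have := congrArg (eval a) hX
  have hXa : ⇑(eval a) ∘ X = a := funext fun i => eval_X (f := a) i
  rwa [RingHom.map_det, RingHom.mapMatrix_apply, ← Matrix.submatrix_map, lefschetzMatrix_map,
    hXa, map_zero] at this

theorem Matrix.HasMaxRank.lefschetzMatrix_one {a : Fin n → K} {d : ℕ}
    (h : (lefschetzMatrix S K a d).HasMaxRank) : (lefschetzMatrix S K 1 d).HasMaxRank := by
  rw [Matrix.hasMaxRank_iff_exists_det_submatrix_ne_zero] at h ⊢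
  exact h.imp (fun ⟨s, hs⟩ => ⟨s, mt (det_submatrix_lefschetzMatrix_eq_zero s id a) hs⟩)
    fun ⟨t, ht⟩ => ⟨t, mt (det_submatrix_lefschetzMatrix_eq_zero id t a) ht⟩

theorem wlp_monIdeal_iff :
    WLP K (monIdeal K n S) ↔
      ∀ d, ((lefschetzMatrix S ℤ 1 d).map (Int.cast : ℤ → K)).HasMaxRank := by
  have hcast (d : ℕ) :
      (lefschetzMatrix S ℤ 1 d).map (Int.cast : ℤ → K) = lefschetzMatrix S K 1 d :=
    lefschetzMatrix_one_map (Int.castRingHom K) d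
  have hlinear {ℓ : MvPolynomial (Fin n) K} :
      ℓ.IsHomogeneous 1 ↔ ∃ a : Fin n → K, ∑ i, a i • X i = ℓ := by
    rw [← mem_homogeneousSubmodule, homogeneousSubmodule_one_eq_span_X,
      Submodule.mem_span_range_iff_exists_fun]
  simp only [hcast]
  constructor
  · rintro ⟨ℓ, hℓ, hwlp⟩ d
    obtain ⟨a, rfl⟩ := hlinear.1 hℓ
    exact ((wlp_degree_iff_hasMaxRank a d).1 (hwlp d)).lefschetzMatrix_one
  · refine fun h => ⟨∑ i, (1 : Fin n → K) i • X i, hlinear.2 ⟨1, rfl⟩, fun j => ?_⟩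
    rcases le_or_gt 0 j with hj | hj
    · lift j to ℕ using hj
      exact (wlp_degree_iff_hasMaxRank 1 j).2 (h j)
    · refine Or.inl fun x hx _ => ?_
      rwa [comp, if_neg hj.not_ge, Submodule.mem_bot] at hx

end Lefschetz

end MonomialQuotient

/-- **Corollary (wlp-0-p).** For an Artinian monomial algebra `A = R/I` (given by the set `S` of
exponent vectors of the monomial generators, containing a power of each variable), the following
are equivalent: (i) `A` has the WLP in characteristic zero; (ii) `A` has the WLP in some positive
characteristic; (iii) `A` has the WLP in every sufficiently large positive characteristic. -/
theorem stmt5 (n : ℕ) (S : Set (Fin n →₀ ℕ))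
    (hart : ∀ i : Fin n, ∃ k : ℕ, Finsupp.single i k ∈ S) :
    List.TFAE
      [ ∀ (K : Type) [Field K] [Infinite K], CharZero K → WLP K (monIdeal K n S),
        ∃ p : ℕ, p.Prime ∧
          ∀ (K : Type) [Field K] [Infinite K], CharP K p → WLP K (monIdeal K n S),
        ∃ B : ℕ, ∀ p : ℕ, p.Prime → B ≤ p →
          ∀ (K : Type) [Field K] [Infinite K], CharP K p → WLP K (monIdeal K n S) ] := by
  tfae_have 1 → 3 := by
    intro h
    obtain ⟨D, hD⟩ := exists_forall_isEmpty_stdMonomial hart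
    choose B hB using fun d => (wlp_monIdeal_iff.1 (h ℚ inferInstance) d).exists_forall_charP
    refine ⟨(Finset.range D).sup B, fun p _ hp K _ _ _ => wlp_monIdeal_iff.2 fun d => ?_⟩
    rcases lt_or_ge d D with hd | hd
    · exact hB d p ((Finset.le_sup (Finset.mem_range.2 hd)).trans hp) K
    · have := hD (d + 1) (by omega)
      exact Matrix.hasMaxRank_of_isEmpty _
  tfae_have 3 → 2 := by
    rintro ⟨B, hB⟩
    obtain ⟨p, hpB, hp⟩ := Nat.exists_infinite_primes B
    exact ⟨p, hp, hB p hp hpB⟩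
  tfae_have 2 → 1 := by
    rintro ⟨p, hp, h⟩ K _ _ _
    have : Fact p.Prime := ⟨hp⟩
    have hmax := wlp_monIdeal_iff.1 (h (AlgebraicClosure (ZMod p)) inferInstance)
    exact wlp_monIdeal_iff.2 fun d => (hmax d).map_intCast_of_charZero K
  tfae_finish
end

section
/- Let p, q, r, m, n be nonnegative integers with 1 ≤ m ≤ n, and let M be the n×n matrix with entries M_{i,j} = C(p, q+j-i) for 1 ≤ j ≤ m and M_{i,j} = C(p, q+r+j-i) for m+1 ≤ j ≤ n. Then det M = Mac(m,q,r) · Mac(n-m, p-q-r, r) · [H(q+r)H(p-q)H(n+r)H(n+p)] / [H(n+p-q)H(n+q+r)H(p)H(r)], where H(n) = ∏_{i=0}^{n-1} i! is the hyperfactorial and Mac(a,b,c) = H(a)H(b)H(c)H(a+b+c)/(H(a+b)H(a+c)H(b+c)). -/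
/-- The hyperfactorial `H(n) = ∏_{i=0}^{n-1} i!`. -/
def hyperfac (n : ℕ) : ℕ := ∏ i ∈ Finset.range n, Nat.factorial i

/-- MacMahon's box formula `Mac(a,b,c) = H(a)H(b)H(c)H(a+b+c)/(H(a+b)H(a+c)H(b+c))`. -/
def MacQ (a b c : ℕ) : ℚ :=
  (hyperfac a * hyperfac b * hyperfac c * hyperfac (a + b + c) : ℚ) /
    (hyperfac (a + b) * hyperfac (a + c) * hyperfac (b + c))

/-- Binomial coefficient `C(p,k)` for an integer `k`, taken to be `0` when `k < 0` (or `k > p`). -/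
def chooseZ (p : ℕ) (k : ℤ) : ℕ := if 0 ≤ k then p.choose k.toNat else 0

/-!
For `b : Fin n → ℕ` with every `b j < p + n`, multiplying column `j` of `(C(p, b_j - i))_{i,j}`
by `b_j! (p+n-1-b_j)!` turns its entries into `p! · g_i(b_j)`, where
`g_i(x) = x(x-1)⋯(x-i+1) · (p+n-1-x)(p+n-2-x)⋯(p+i+1-x)` has degree `n - 1` and does not depend
on `b`. So the determinant is the Vandermonde determinant of the `b_j` times a constant, and the
constant is read off at `b_j = j`, where the matrix is unitriangular:
`det (C(p, b_j - i)) = H(p+n)/H(p) · ∏_{i<j} (b_j - b_i) / ∏_j b_j! (p+n-1-b_j)!`.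
The theorem is the case `b_j = q + j` for `j < m` and `b_j = q + r + j` otherwise, where the
Vandermonde product and the factorials are runs of consecutive factorials, i.e. quotients of
hyperfactorials.
-/

open Finset Polynomial Matrix Nat

lemma hyperfac_add (a k : ℕ) : hyperfac (a + k) = hyperfac a * ∏ i ∈ range k, (a + i)! := by
  induction k with
  | zero => simp
  | succ k ih =>
    rw [← Nat.add_assoc, hyperfac, prod_range_succ, ← hyperfac, ih, prod_range_succ, mul_assoc]

lemma hyperfac_ne_zero (k : ℕ) : (hyperfac k : ℚ) ≠ 0 := by
  simpa [hyperfac, Finset.prod_eq_zero_iff] using fun i _ => Nat.factorial_ne_zero i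

lemma prod_range_factorial (k : ℕ) : ∏ i ∈ range k, (i ! : ℚ) = hyperfac k := by
  rw [hyperfac, Nat.cast_prod]

lemma prod_range_factorial_add (a k : ℕ) :
    ∏ i ∈ range k, ((a + i)! : ℚ) = hyperfac (a + k) / hyperfac a := by
  rw [eq_div_iff (hyperfac_ne_zero a), hyperfac_add]
  push_cast
  ring

lemma prod_range_factorial_add_reflect (a k : ℕ) :
    ∏ i ∈ range k, ((a + (k - 1 - i))! : ℚ) = hyperfac (a + k) / hyperfac a := by
  rw [prod_range_reflect (fun i => ((a + i)! : ℚ)), prod_range_factorial_add]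

lemma prod_range_natCast_sub (a k : ℕ) :
    ∏ i ∈ range k, ((a : ℚ) - i) = a.descFactorial k := by
  rw [← descPochhammer_eval_eq_prod_range, descPochhammer_eval_eq_descFactorial]

lemma prod_range_natCast_sub_self (a : ℕ) : ∏ i ∈ range a, ((a : ℚ) - i) = a ! := by
  rw [prod_range_natCast_sub, descFactorial_self]

lemma chooseZ_sub_mul_factorial {p n i b : ℕ} (hi : i < n) (hb : b < p + n) :
    chooseZ p ((b : ℤ) - i) * (b ! * (p + n - 1 - b)!) =
      p ! * (b.descFactorial i * (p + n - 1 - b).descFactorial (n - 1 - i)) := by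
  rcases lt_or_ge b i with hbi | hib
  · have : chooseZ p ((b : ℤ) - i) = 0 := if_neg (by omega)
    simp [this, Nat.descFactorial_eq_zero_iff_lt.mpr hbi]
  rcases lt_or_ge (p + i) b with hpb | hbp
  · have : chooseZ p ((b : ℤ) - i) = 0 := by
      rw [chooseZ, if_pos (by omega)]
      exact Nat.choose_eq_zero_of_lt (by omega)
    simp [this, Nat.descFactorial_eq_zero_iff_lt.mpr (show p + n - 1 - b < n - 1 - i by omega)]
  · have hchoose : chooseZ p ((b : ℤ) - i) = p.choose (b - i) := by
      rw [chooseZ, if_pos (by omega)]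
      congr 1
      omega
    have hbfac := Nat.factorial_mul_descFactorial hib
    have hcfac := Nat.factorial_mul_descFactorial (show n - 1 - i ≤ p + n - 1 - b by omega)
    have hpfac := Nat.choose_mul_factorial_mul_factorial (show b - i ≤ p by omega)
    rw [show p + n - 1 - b - (n - 1 - i) = p - (b - i) by omega] at hcfac
    rw [hchoose, ← hbfac, ← hcfac, ← hpfac]
    ring

noncomputable def choosePoly (p n i : ℕ) : ℚ[X] :=
  descPochhammer ℚ i * (descPochhammer ℚ (n - 1 - i)).comp (C ((p + n - 1 : ℕ) : ℚ) - X)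

lemma choosePoly_eval_natCast {p n i b : ℕ} (hb : b ≤ p + n - 1) :
    (choosePoly p n i).eval (b : ℚ) =
      b.descFactorial i * (p + n - 1 - b).descFactorial (n - 1 - i) := by
  rw [choosePoly, eval_mul, eval_comp, eval_sub, eval_C, eval_X, ← Nat.cast_sub hb,
    descPochhammer_eval_eq_descFactorial, descPochhammer_eval_eq_descFactorial]

lemma choosePoly_natDegree_lt {p n i : ℕ} (hi : i < n) : (choosePoly p n i).natDegree < n := by
  have hlin : (C ((p + n - 1 : ℕ) : ℚ) - X).natDegree = 1 := by
    rw [natDegree_sub_eq_right_of_natDegree_lt] <;> simp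
  calc (choosePoly p n i).natDegree
      ≤ i + (n - 1 - i) * 1 := by
        refine natDegree_mul_le.trans (le_of_eq ?_)
        rw [natDegree_comp, hlin, descPochhammer_natDegree, descPochhammer_natDegree]
    _ < n := by omega

lemma eval_matrix_eq_vandermonde_mul {R : Type*} [CommRing R] {n : ℕ} (P : Fin n → R[X])
    (hP : ∀ j, (P j).natDegree < n) (v : Fin n → R) :
    of (fun i j => (P j).eval (v i)) =
      vandermonde v * of (fun i j : Fin n => (P j).coeff i) := by
  ext i j
  rw [mul_apply, of_apply, eval_eq_sum, sum_eq_of_subset _ (fun k => zero_mul (v i ^ k))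
    (supp_subset_range (hP j)), ← Fin.sum_univ_eq_sum_range]
  exact Finset.sum_congr rfl fun k _ => mul_comm _ _

lemma det_eval_mul_det_vandermonde {R : Type*} [CommRing R] {n : ℕ} (P : Fin n → R[X])
    (hP : ∀ j, (P j).natDegree < n) (v w : Fin n → R) :
    (of fun i j => (P j).eval (v i)).det * (vandermonde w).det =
      (of fun i j => (P j).eval (w i)).det * (vandermonde v).det := by
  rw [eval_matrix_eq_vandermonde_mul P hP, eval_matrix_eq_vandermonde_mul P hP, det_mul, det_mul]
  ring

lemma det_vandermonde_eq_prod_range {R : Type*} [CommRing R] (n : ℕ) (v : ℕ → R) :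
    (vandermonde fun j : Fin n => v j).det = ∏ j ∈ range n, ∏ i ∈ range j, (v j - v i) := by
  rw [det_vandermonde, Finset.prod_comm' (t' := univ) (s' := fun j => Iio j) (by simp),
    ← Fin.prod_univ_eq_prod_range (fun j => ∏ i ∈ range j, (v j - v i))]
  refine Finset.prod_congr rfl fun j _ => ?_
  rw [← Nat.Iio_eq_range, ← Fin.map_valEmbedding_Iio, prod_map]
  rfl

lemma det_vandermonde_val (n : ℕ) :
    (vandermonde fun j : Fin n => (j : ℚ)).det = hyperfac n := by
  rw [det_vandermonde_eq_prod_range n (fun j => (j : ℚ)), ← prod_range_factorial]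
  exact Finset.prod_congr rfl fun j _ => prod_range_natCast_sub_self j

section DetChooseSub

variable (p : ℕ) {n : ℕ}

lemma prod_factorial_mul_det_chooseZ_sub (b : Fin n → ℕ) (hb : ∀ j, b j < p + n) :
    (∏ j, ((b j)! * (p + n - 1 - b j)! : ℚ)) *
        (of fun i j : Fin n => (chooseZ p ((b j : ℤ) - i) : ℚ)).det =
      (p ! : ℚ) ^ n * (of fun j i : Fin n => (choosePoly p n i).eval (b j : ℚ)).det := by
  have hfactor : diagonal (fun j => ((b j)! * (p + n - 1 - b j)! : ℚ)) *
      (of fun i j : Fin n => (chooseZ p ((b j : ℤ) - i) : ℚ))ᵀ =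
      (p ! : ℚ) • of fun j i : Fin n => (choosePoly p n i).eval (b j : ℚ) := by
    ext j i
    rw [diagonal_mul, transpose_apply, of_apply, Matrix.smul_apply, of_apply,
      choosePoly_eval_natCast (by have := hb j; omega), smul_eq_mul, mul_comm]
    exact_mod_cast chooseZ_sub_mul_factorial i.2 (hb j)
  have hdet := congrArg det hfactor
  rwa [det_mul, det_diagonal, det_transpose, det_smul, Fintype.card_fin] at hdet

lemma det_chooseZ_sub_val :
    (of fun i j : Fin n => (chooseZ p ((j : ℕ) - (i : ℕ) : ℤ) : ℚ)).det = 1 := by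
  rw [det_of_isUpperTriangular]
  · simp [chooseZ]
  · intro i j hji
    simp only [of_apply, chooseZ, Nat.cast_eq_zero]
    rw [if_neg]
    have : (j : ℕ) < i := hji
    omega

lemma prod_factorial_val :
    ∏ j : Fin n, ((j : ℕ)! * (p + n - 1 - j)! : ℚ) =
      hyperfac n * (hyperfac (p + n) / hyperfac p) := by
  rw [Fin.prod_univ_eq_prod_range (fun j => (j ! : ℚ) * ((p + n - 1 - j)! : ℚ)),
    prod_mul_distrib, prod_range_factorial, ← prod_range_factorial_add_reflect]
  congr 1
  refine Finset.prod_congr rfl fun j hj => ?_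
  rw [show p + n - 1 - j = p + (n - 1 - j) by have := mem_range.mp hj; omega]

theorem det_chooseZ_sub (b : Fin n → ℕ) (hb : ∀ j, b j < p + n) :
    (of fun i j : Fin n => (chooseZ p ((b j : ℤ) - i) : ℚ)).det =
      hyperfac (p + n) / hyperfac p * (vandermonde fun j => (b j : ℚ)).det /
        ∏ j, ((b j)! * (p + n - 1 - b j)! : ℚ) := by
  have hD : ∏ j, ((b j)! * (p + n - 1 - b j)! : ℚ) ≠ 0 := by
    simp [Finset.prod_eq_zero_iff, Nat.factorial_ne_zero]
  have hval := prod_factorial_mul_det_chooseZ_sub p (Fin.val : Fin n → ℕ) (fun j => by omega)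
  rw [det_chooseZ_sub_val, mul_one, prod_factorial_val] at hval
  have hcomp := det_eval_mul_det_vandermonde (fun i : Fin n => choosePoly p n i)
    (fun i => choosePoly_natDegree_lt i.2) (fun j => (b j : ℚ)) (fun j => (j : ℚ))
  rw [det_vandermonde_val] at hcomp
  rw [eq_div_iff hD, ← mul_left_inj' (hyperfac_ne_zero n)]
  linear_combination (hyperfac n : ℚ) * prod_factorial_mul_det_chooseZ_sub p b hb +
    (p ! : ℚ) ^ n * hcomp - (vandermonde fun j => (b j : ℚ)).det * hval

end DetChooseSub

def splitShift (q r m j : ℕ) : ℕ := if j < m then q + j else q + r + j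

lemma prod_range_descFactorial (a k s : ℕ) :
    ∏ t ∈ range s, ((a + k + t).descFactorial k : ℚ) =
      hyperfac (a + k + s) / hyperfac (a + k) / (hyperfac (a + s) / hyperfac a) := by
  have hterm : ∀ t, ((a + k + t).descFactorial k : ℚ) = (a + k + t)! / (a + t)! := by
    intro t
    rw [eq_div_iff (by positivity), mul_comm, ← Nat.cast_mul,
      show a + t = a + k + t - k by omega, factorial_mul_descFactorial (by omega)]
  simp only [hterm, prod_div_distrib, prod_range_factorial_add]

lemma det_vandermonde_splitShift (q r m s : ℕ) :
    (vandermonde fun j : Fin (m + s) => (splitShift q r m j : ℚ)).det =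
      hyperfac m * hyperfac s *
        (hyperfac (r + m + s) / hyperfac (r + m) / (hyperfac (r + s) / hyperfac r)) := by
  have hfirst : ∀ j ∈ range m,
      ∏ i ∈ range j, ((splitShift q r m j : ℚ) - splitShift q r m i) = j ! := by
    intro j hj
    rw [← prod_range_natCast_sub_self]
    refine Finset.prod_congr rfl fun i hi => ?_
    simp only [splitShift, if_pos (mem_range.mp hj),
      if_pos ((mem_range.mp hi).trans (mem_range.mp hj))]
    push_cast
    ring
  have hsecond : ∀ t ∈ range s, ∏ i ∈ range (m + t),
      ((splitShift q r m (m + t) : ℚ) - splitShift q r m i) =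
        (r + m + t).descFactorial m * t ! := by
    intro t _
    rw [prod_range_add, ← prod_range_natCast_sub, ← prod_range_natCast_sub_self]
    congr 1 <;> refine Finset.prod_congr rfl fun i hi => ?_ <;> have := mem_range.mp hi
    · simp only [splitShift, if_neg (show ¬ m + t < m by omega), if_pos this]
      push_cast
      ring
    · simp only [splitShift, if_neg (show ¬ m + t < m by omega),
        if_neg (show ¬ m + i < m by omega)]
      push_cast
      ring
  rw [det_vandermonde_eq_prod_range (m + s) (fun j => (splitShift q r m j : ℚ)), prod_range_add,
    Finset.prod_congr rfl hfirst, Finset.prod_congr rfl hsecond, prod_mul_distrib,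
    prod_range_descFactorial, prod_range_factorial, prod_range_factorial]
  ring

lemma prod_factorial_splitShift (q r u m s : ℕ) :
    ∏ j : Fin (m + s),
        ((splitShift q r m j)! * (q + r + u + (m + s) - 1 - splitShift q r m j)! : ℚ) =
      hyperfac (q + m) / hyperfac q * (hyperfac (r + u + s + m) / hyperfac (r + u + s)) *
        (hyperfac (q + r + m + s) / hyperfac (q + r + m) * (hyperfac (u + s) / hyperfac u)) := by
  have hfirst : ∀ j ∈ range m, ((splitShift q r m j)! *
      (q + r + u + (m + s) - 1 - splitShift q r m j)! : ℚ) =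
        (q + j)! * (r + u + s + (m - 1 - j))! := by
    intro j hj
    have := mem_range.mp hj
    rw [splitShift, if_pos this,
      show q + r + u + (m + s) - 1 - (q + j) = r + u + s + (m - 1 - j) by omega]
  have hsecond : ∀ t ∈ range s, ((splitShift q r m (m + t))! *
      (q + r + u + (m + s) - 1 - splitShift q r m (m + t))! : ℚ) =
        (q + r + m + t)! * (u + (s - 1 - t))! := by
    intro t ht
    have := mem_range.mp ht
    rw [splitShift, if_neg (by omega), show q + r + (m + t) = q + r + m + t by ring,
      show q + r + u + (m + s) - 1 - (q + r + m + t) = u + (s - 1 - t) by omega]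
  rw [Fin.prod_univ_eq_prod_range (fun j => ((splitShift q r m j)! *
      (q + r + u + (m + s) - 1 - splitShift q r m j)! : ℚ)), prod_range_add,
    Finset.prod_congr rfl hfirst, Finset.prod_congr rfl hsecond, prod_mul_distrib,
    prod_mul_distrib, prod_range_factorial_add, prod_range_factorial_add,
    prod_range_factorial_add_reflect, prod_range_factorial_add_reflect]

theorem stmt10_general (p q r m n : ℕ) (hmn : m ≤ n) (hqrp : q + r ≤ p) :
    Matrix.det (Matrix.of fun i j : Fin n =>
        if (j : ℕ) < m then (chooseZ p ((q : ℤ) + (j : ℕ) - (i : ℕ)) : ℚ)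
        else (chooseZ p ((q : ℤ) + r + (j : ℕ) - (i : ℕ)) : ℚ)) =
      MacQ m q r * MacQ (n - m) (p - q - r) r *
        ((hyperfac (q + r) * hyperfac (p - q) * hyperfac (n + r) * hyperfac (n + p) : ℚ) /
          (hyperfac (n + p - q) * hyperfac (n + q + r) * hyperfac p * hyperfac r)) := by
  obtain ⟨s, rfl⟩ : ∃ s, n = m + s := ⟨n - m, by omega⟩
  obtain ⟨u, rfl⟩ : ∃ u, p = q + r + u := ⟨p - q - r, by omega⟩
  have hentries : (Matrix.of fun i j : Fin (m + s) =>
      if (j : ℕ) < m then (chooseZ (q + r + u) ((q : ℤ) + (j : ℕ) - (i : ℕ)) : ℚ)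
      else (chooseZ (q + r + u) ((q : ℤ) + r + (j : ℕ) - (i : ℕ)) : ℚ)) =
      of fun i j : Fin (m + s) =>
        (chooseZ (q + r + u) ((splitShift q r m j : ℤ) - (i : ℕ)) : ℚ) := by
    ext i j
    by_cases hj : (j : ℕ) < m <;> simp [splitShift, hj, add_assoc]
  have hshift : ∀ j : Fin (m + s), splitShift q r m j < q + r + u + (m + s) := by
    intro j
    have := j.2
    unfold splitShift
    split_ifs <;> omega
  rw [hentries, det_chooseZ_sub _ _ hshift, det_vandermonde_splitShift,
    prod_factorial_splitShift, MacQ, MacQ, show m + s - m = s by omega,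
    show q + r + u - q - r = u by omega, show q + r + u - q = r + u by omega,
    show m + s + (q + r + u) - q = r + u + s + m by omega]
  -- brings equal arguments of `hyperfac` to the same normal form, so that the factors cancel
  simp only [add_comm, add_left_comm]
  field_simp (disch := exact hyperfac_ne_zero _)

/-- **Lemma (split-binom-det).** For nonnegative integers `p, q, r, m, n` with `1 ≤ m ≤ n`
(and `q + r ≤ p`, needed for all terms of the formula to be defined), the `n×n` matrix `M` with
entries `M_{i,j} = C(p, q+j-i)` for `1 ≤ j ≤ m` and `M_{i,j} = C(p, q+r+j-i)` for `m+1 ≤ j ≤ n`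
has determinant
`Mac(m,q,r)·Mac(n-m, p-q-r, r)·H(q+r)H(p-q)H(n+r)H(n+p)/(H(n+p-q)H(n+q+r)H(p)H(r))`. -/
theorem stmt10 (p q r m n : ℕ) (hm : 1 ≤ m) (hmn : m ≤ n) (hqrp : q + r ≤ p) :
    Matrix.det (Matrix.of fun i j : Fin n =>
        if (j : ℕ) < m then (chooseZ p ((q : ℤ) + (j : ℕ) - (i : ℕ)) : ℚ)
        else (chooseZ p ((q : ℤ) + r + (j : ℕ) - (i : ℕ)) : ℚ)) =
      MacQ m q r * MacQ (n - m) (p - q - r) r *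
        ((hyperfac (q + r) * hyperfac (p - q) * hyperfac (n + r) * hyperfac (n + p) : ℚ) /
          (hyperfac (n + p - q) * hyperfac (n + q + r) * hyperfac p * hyperfac r)) :=
  stmt10_general p q r m n hmn hqrp
end

section
/- For nonnegative integers a, b, c with a, b, c all positive, MacMahon's number Mac(a,b,c) = H(a)H(b)H(c)H(a+b+c)/(H(a+b)H(a+c)H(b+c)) is a positive integer all of whose prime divisors are at most a+b+c-1. If one of a, b, c is zero, then Mac(a,b,c) = 1. -/
open Finset Nat

def boxProd (c a b : ℕ) : ℕ := ∏ i ∈ range a, ∏ j ∈ range b, (c + i + j + 1)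

@[simp]
lemma hyperfac_zero : hyperfac 0 = 1 := rfl

lemma hyperfac_succ (n : ℕ) : hyperfac (n + 1) = hyperfac n * n ! :=
  prod_range_succ _ _

lemma hyperfac_pos (n : ℕ) : 0 < hyperfac n :=
  prod_pos fun i _ => factorial_pos i

lemma hyperfac_succ_eq_superFactorial (n : ℕ) : hyperfac (n + 1) = sf n :=
  prod_range_succ_factorial n

@[simp]
lemma boxProd_zero_left (c b : ℕ) : boxProd c 0 b = 1 := rfl

@[simp]
lemma boxProd_zero_right (c a : ℕ) : boxProd c a 0 = 1 := by
  simp [boxProd]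

lemma boxProd_pos (c a b : ℕ) : 0 < boxProd c a b :=
  prod_pos fun _ _ => prod_pos fun _ _ => succ_pos _

lemma boxProd_succ_left (c a b : ℕ) :
    boxProd c (a + 1) b = boxProd c a b * (a + c + 1).ascFactorial b := by
  rw [boxProd, boxProd, prod_range_succ, ascFactorial_eq_prod_range]
  congr 1
  exact prod_congr rfl fun j _ => by ring

lemma le_of_prime_dvd_boxProd {p c a b : ℕ} (hp : p.Prime) (h : p ∣ boxProd c a b) :
    p ≤ a + b + c - 1 := by
  obtain ⟨i, hi, hpi⟩ := hp.prime.exists_mem_finset_dvd h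
  obtain ⟨j, hj, hpj⟩ := hp.prime.exists_mem_finset_dvd hpi
  rw [mem_range] at hi hj
  have := Nat.le_of_dvd (succ_pos _) hpj
  omega

lemma hyperfac_add_add_mul (a b c : ℕ) :
    hyperfac (a + b + c) * hyperfac c = hyperfac (a + c) * hyperfac (b + c) * boxProd c a b := by
  induction a with
  | zero => simp [mul_comm]
  | succ a ih =>
    calc hyperfac (a + 1 + b + c) * hyperfac c
        = hyperfac (a + b + c) * hyperfac c * (a + b + c) ! := by
          rw [show a + 1 + b + c = a + b + c + 1 by ring, hyperfac_succ]; ring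
      _ = hyperfac (a + c) * hyperfac (b + c) * boxProd c a b *
            ((a + c) ! * (a + c + 1).ascFactorial b) := by
          rw [ih, factorial_mul_ascFactorial, show a + c + b = a + b + c by ring]
      _ = hyperfac (a + 1 + c) * hyperfac (b + c) * boxProd c (a + 1) b := by
          rw [boxProd_succ_left, show a + 1 + c = a + c + 1 by ring, hyperfac_succ]; ring

lemma hyperfac_add_s11 (a b : ℕ) : hyperfac (a + b) = hyperfac a * hyperfac b * boxProd 0 a b := by
  simpa using hyperfac_add_add_mul a b 0

lemma MacQ_eq_boxProd_div (a b c : ℕ) : MacQ a b c = (boxProd c a b : ℚ) / boxProd 0 a b := by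
  have h_ab : (hyperfac (a + b) : ℚ) = hyperfac a * hyperfac b * boxProd 0 a b := by
    exact_mod_cast hyperfac_add_s11 a b
  have h_abc : (hyperfac (a + b + c) * hyperfac c : ℚ) =
      hyperfac (a + c) * hyperfac (b + c) * boxProd c a b := by
    exact_mod_cast hyperfac_add_add_mul a b c
  have hH (n : ℕ) : (hyperfac n : ℚ) ≠ 0 := by exact_mod_cast (hyperfac_pos n).ne'
  have hD : (boxProd 0 a b : ℚ) ≠ 0 := by exact_mod_cast (boxProd_pos 0 a b).ne'
  rw [MacQ, h_ab, div_eq_div_iff (by simp [hH, hD]) hD]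
  linear_combination (hyperfac a * hyperfac b * boxProd 0 a b : ℚ) * h_abc

theorem Fin.prod_prod_Ioi_eq_prod_range_prod_range {M : Type*} [CommMonoid M] (n : ℕ)
    (g : ℕ → ℕ → M) :
    ∏ i : Fin n, ∏ j ∈ Ioi i, g i j = ∏ j ∈ range n, ∏ i ∈ range j, g i j := by
  have hIoi (i : Fin n) : ∏ j ∈ Ioi i, g i j = ∏ j ∈ Ioo (i : ℕ) n, g i j := by
    rw [← Fin.map_valEmbedding_Ioi, prod_map]; rfl
  simp_rw [hIoi]
  rw [Fin.prod_univ_eq_prod_range (fun i => ∏ j ∈ Ioo i n, g i j)]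
  exact prod_comm' fun i j => by simp only [mem_range, mem_Ioo]; omega

lemma hyperfac_dvd_prod_prod_sub (n : ℕ) (w : ℕ → ℤ) :
    (hyperfac n : ℤ) ∣ ∏ j ∈ range n, ∏ i ∈ range j, (w j - w i) := by
  cases n with
  | zero => simp
  | succ m =>
    have h := Matrix.superFactorial_dvd_vandermonde_det fun i : Fin (m + 1) => w i
    rwa [Matrix.det_vandermonde, Fin.prod_prod_Ioi_eq_prod_range_prod_range (m + 1)
      fun i j => w j - w i, ← hyperfac_succ_eq_superFactorial] at h

lemma prod_range_add_sub (x : ℤ) (m : ℕ) :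
    ∏ i ∈ range m, (x + m - i) = ∏ i ∈ range m, (x + i + 1) := by
  rw [← prod_range_reflect (fun i : ℕ => x + i + 1)]
  refine prod_congr rfl fun i hi => ?_
  rw [mem_range] at hi
  rw [Nat.cast_sub (by omega), Nat.cast_sub (by omega)]
  push_cast; ring

lemma prod_range_sub_eq_factorial (m : ℕ) : ∏ i ∈ range m, ((m : ℤ) - i) = m ! := by
  simpa [← prod_range_add_one_eq_factorial] using prod_range_add_sub 0 m

lemma prod_prod_sub_gap (a b c : ℕ) :
    let w : ℕ → ℤ := fun k => k + if a ≤ k then (c : ℤ) else 0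
    ∏ j ∈ range (a + b), ∏ i ∈ range j, (w j - w i) =
      ((hyperfac a * hyperfac b * boxProd c a b : ℕ) : ℤ) := by
  intro w
  have hw_lt {k : ℕ} (hk : k < a) : w k = k := by simp [w, Nat.not_le.mpr hk]
  have hw_ge (t : ℕ) : w (a + t) = (c + t : ℕ) + a := by simp [w]; ring
  have h_low (j : ℕ) (hj : j < a) : ∏ i ∈ range j, (w j - w i) = j ! := by
    rw [← prod_range_sub_eq_factorial]
    refine prod_congr rfl fun i hi => ?_
    rw [hw_lt hj, hw_lt ((mem_range.mp hi).trans hj)]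
  have h_high (t : ℕ) : ∏ i ∈ range (a + t), (w (a + t) - w i) =
      t ! * ∏ i ∈ range a, ((c + t : ℕ) + i + 1 : ℤ) := by
    rw [prod_range_add, mul_comm, ← prod_range_add_sub, ← prod_range_sub_eq_factorial]
    congr 1 <;> refine prod_congr rfl fun i hi => ?_
    · rw [hw_ge, hw_ge]; push_cast; ring
    · rw [hw_ge, hw_lt (mem_range.mp hi)]
  rw [prod_range_add, prod_congr rfl fun j hj => h_low j (mem_range.mp hj),
    prod_congr rfl fun t _ => h_high t, prod_mul_distrib, prod_comm (s := range b)]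
  push_cast [hyperfac, boxProd]
  rw [← mul_assoc]
  congr 1
  exact prod_congr rfl fun i _ => prod_congr rfl fun j _ => by ring

lemma hyperfac_add_dvd (a b c : ℕ) :
    hyperfac (a + b) ∣ hyperfac a * hyperfac b * boxProd c a b := by
  have h := hyperfac_dvd_prod_prod_sub (a + b) fun k => k + if a ≤ k then (c : ℤ) else 0
  rw [prod_prod_sub_gap] at h
  exact_mod_cast h

lemma boxProd_zero_dvd (a b c : ℕ) : boxProd 0 a b ∣ boxProd c a b := by
  have h := hyperfac_add_dvd a b c
  rwa [hyperfac_add_s11, Nat.mul_dvd_mul_iff_left (mul_pos (hyperfac_pos a) (hyperfac_pos b))] at h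

/-- **Properties of MacMahon's numbers.** If `a, b, c` are all positive then
`Mac(a,b,c) = H(a)H(b)H(c)H(a+b+c)/(H(a+b)H(a+c)H(b+c))` is a positive integer all of whose prime
divisors are at most `a+b+c-1`; if one of `a, b, c` is zero then `Mac(a,b,c) = 1`. -/
theorem stmt11 (a b c : ℕ) :
    (0 < a → 0 < b → 0 < c → ∃ N : ℕ, 0 < N ∧ (N : ℚ) = MacQ a b c ∧
      ∀ p : ℕ, p.Prime → p ∣ N → p ≤ a + b + c - 1) ∧
    ((a = 0 ∨ b = 0 ∨ c = 0) → MacQ a b c = 1) := by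
  have hD : (boxProd 0 a b : ℚ) ≠ 0 := by exact_mod_cast (boxProd_pos 0 a b).ne'
  refine ⟨fun _ _ _ => ?_, fun h0 => ?_⟩
  · obtain ⟨N, hN⟩ := boxProd_zero_dvd a b c
    have hP := boxProd_pos c a b
    rw [hN] at hP
    refine ⟨N, pos_of_mul_pos_right hP (zero_le _), ?_, fun p hp hpN => ?_⟩
    · rw [MacQ_eq_boxProd_div, hN, cast_mul, mul_div_cancel_left₀ _ hD]
    · exact le_of_prime_dvd_boxProd hp (hN ▸ dvd_mul_of_dvd_right hpN _)
  · rw [MacQ_eq_boxProd_div]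
    rcases h0 with rfl | rfl | rfl
    · simp
    · simp
    · exact div_self hD
end

section
/- Let a, b, c be positive integers and let h(j) = dim_K [K[x,y,z]/(x^a,y^b,z^c)]_j be the Hilbert function of the monomial complete intersection. Then h(j-2) < h(j-1) if and only if 1 ≤ j < min{a+b, a+c, b+c, (a+b+c)/2}; h(j-2) = h(j-1) if and only if min{a+b, a+c, b+c, (a+b+c)/2} ≤ j ≤ max{a, b, c, (a+b+c)/2}; and h(j-2) > h(j-1) if and only if max{a, b, c, (a+b+c)/2} < j ≤ a+b+c-1. -/
open MvPolynomial

/-- The monomial complete intersection `(xᵃ, yᵇ, zᶜ) ⊆ K[x,y,z]`. -/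
noncomputable def ciIdeal (K : Type*) [Field K] (a b c : ℕ) :
    Ideal (MvPolynomial (Fin 3) K) :=
  Ideal.span {X 0 ^ a, X 1 ^ b, X 2 ^ c}

/-!
The residues of the monomials outside a monomial ideal form a basis of the quotient, so `h(e)` is
the number of `(i, j, k) ∈ [0,a) × [0,b) × [0,c)` with `i + j + k = e`. Slicing by `i`, the first
difference `h(e) - h(e-1)` is a sum over `i < a` of first differences of the planar count of
`j + k = f` in `[0,b) × [0,c)`, and that difference is `+1` for `0 ≤ f < min b c`, `-1` for
`max b c ≤ f < b + c` and `0` otherwise. So `h(e) - h(e-1)` is the difference of the sizes of two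
integer intervals cut down to `[0,a)`, and its sign is decided by linear arithmetic.
-/

open Finset

lemma card_filter_range_le_and_le (c : ℕ) (A B : ℤ) :
    (#{k ∈ range c | A ≤ ((k : ℕ) : ℤ) ∧ ((k : ℕ) : ℤ) ≤ B} : ℤ) =
      max (min (c : ℤ) (B + 1) - max A 0) 0 := by
  induction c with
  | zero => simp only [range_zero, filter_empty, card_empty, Nat.cast_zero]; omega
  | succ n ih =>
    rw [range_add_one, filter_insert]
    split_ifs
    · rw [card_insert_of_notMem (by simp)]
      push_cast at ih ⊢
      omega
    · push_cast at ih ⊢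
      omega

lemma card_filter_product_eq_sum {α β : Type*} (s : Finset α) (t : Finset β) (P : α → β → Prop)
    [∀ x y, Decidable (P x y)] :
    #{p ∈ s ×ˢ t | P p.1 p.2} = ∑ x ∈ s, #{y ∈ t | P x y} := by
  simp only [card_filter, sum_product]

def boxCount₂ (b c : ℕ) (e : ℤ) : ℕ :=
  #{p ∈ range b ×ˢ range c | (p.1 : ℤ) + p.2 = e}

def boxCount₃ (a b c : ℕ) (e : ℤ) : ℕ :=
  #{p ∈ range a ×ˢ range b ×ˢ range c | (p.1 : ℤ) + p.2.1 + p.2.2 = e}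

lemma boxCount₂_eq_card (b c : ℕ) (e : ℤ) :
    boxCount₂ b c e = #{j ∈ range b | e - c + 1 ≤ ((j : ℕ) : ℤ) ∧ ((j : ℕ) : ℤ) ≤ e} := by
  rw [boxCount₂, card_filter_product_eq_sum (P := fun (j k : ℕ) => (j : ℤ) + k = e), card_filter]
  refine sum_congr rfl fun j _ => ?_
  split_ifs
  · rw [card_eq_one]
    exact ⟨(e - j).toNat, by ext k; simp only [mem_filter, mem_range, mem_singleton]; omega⟩
  · rw [card_eq_zero, filter_eq_empty_iff]
    intro k hk
    rw [mem_range] at hk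
    omega

lemma boxCount₃_eq_sum (a b c : ℕ) (e : ℤ) :
    boxCount₃ a b c e = ∑ i ∈ range a, boxCount₂ b c (e - i) := by
  rw [boxCount₃,
    card_filter_product_eq_sum (P := fun (i : ℕ) (q : ℕ × ℕ) => (i : ℤ) + q.1 + q.2 = e)]
  refine sum_congr rfl fun i _ => congrArg card (filter_congr fun q _ => ?_)
  omega

lemma boxCount₃_of_neg (a b c : ℕ) {e : ℤ} (he : e < 0) : boxCount₃ a b c e = 0 := by
  rw [boxCount₃, card_eq_zero, filter_eq_empty_iff]
  intro _ _
  omega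

lemma boxCount₂_sub_boxCount₂_sub_one (b c : ℕ) (f : ℤ) :
    (boxCount₂ b c f : ℤ) - boxCount₂ b c (f - 1) =
      (if 0 ≤ f ∧ f < min (b : ℤ) c then 1 else 0) -
        (if max (b : ℤ) c ≤ f ∧ f < b + c then 1 else 0) := by
  rw [boxCount₂_eq_card, boxCount₂_eq_card, card_filter_range_le_and_le,
    card_filter_range_le_and_le]
  split_ifs <;> omega

lemma boxCount₃_sub_boxCount₃_sub_one (a b c : ℕ) (e : ℤ) :
    (boxCount₃ a b c e : ℤ) - boxCount₃ a b c (e - 1) =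
      max (min (a : ℤ) (e + 1) - max (e + 1 - min (b : ℤ) c) 0) 0 -
        max (min (a : ℤ) (e - max (b : ℤ) c + 1) - max (e + 1 - b - c) 0) 0 := by
  rw [← card_filter_range_le_and_le, ← card_filter_range_le_and_le, boxCount₃_eq_sum,
    boxCount₃_eq_sum]
  push_cast
  rw [← sum_sub_distrib]
  simp_rw [sub_right_comm e 1, boxCount₂_sub_boxCount₂_sub_one, sum_sub_distrib, sum_boole]
  congr 2 <;> exact congrArg card (filter_congr fun i _ => by omega)

lemma hilb_of_neg (K : Type*) [Field K] {n : ℕ} (I : Ideal (MvPolynomial (Fin n) K)) {e : ℤ}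
    (he : e < 0) : hilb K I e = 0 := by
  rw [hilb, comp, if_neg he.not_ge, finrank_bot]

def standardExponents {σ : Type*} (S : Set (σ →₀ ℕ)) (d : ℕ) : Set (σ →₀ ℕ) :=
  {s | s.degree = d ∧ ∀ t ∈ S, ¬ t ≤ s}

section MonomialIdeal

variable {K : Type*} [Field K] {n : ℕ}

lemma mk_monomial_eq_zero {S : Set (Fin n →₀ ℕ)} {s t : Fin n →₀ ℕ} (ht : t ∈ S) (hts : t ≤ s) :
    Ideal.Quotient.mk (Ideal.span ((fun s => monomial s (1 : K)) '' S)) (monomial s 1) = 0 := by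
  rw [Ideal.Quotient.eq_zero_iff_mem, mem_ideal_span_monomial_image]
  intro u hu
  exact ⟨t, ht, Finset.mem_singleton.mp (support_monomial_subset hu) ▸ hts⟩

lemma comp_monomialIdeal_eq_span (S : Set (Fin n →₀ ℕ)) (d : ℕ) :
    comp K (Ideal.span ((fun s => monomial s (1 : K)) '' S)) d =
      Submodule.span K (Set.range fun s : standardExponents S d =>
        Ideal.Quotient.mk (Ideal.span ((fun s => monomial s (1 : K)) '' S)) (monomial s.1 1)) := by
  rw [comp, if_pos (Int.natCast_nonneg d), Int.toNat_natCast,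
    homogeneousSubmodule_eq_finsupp_supported, AddMonoidAlgebra.supported_eq_span_single,
    Submodule.map_span]
  apply le_antisymm <;> rw [Submodule.span_le]
  · rintro _ ⟨_, ⟨s, hs, rfl⟩, rfl⟩
    by_cases hstd : ∀ t ∈ S, ¬ t ≤ s
    · exact Submodule.subset_span ⟨⟨s, hs, hstd⟩, rfl⟩
    · push Not at hstd
      obtain ⟨t, ht, hts⟩ := hstd
      simp only [SetLike.mem_coe, AlgHom.toLinearMap_apply, Ideal.Quotient.mkₐ_eq_mk,
        single_eq_monomial, mk_monomial_eq_zero ht hts]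
      exact zero_mem _
  · rintro _ ⟨s, rfl⟩
    exact Submodule.subset_span ⟨_, ⟨s.1, s.2.1, rfl⟩, rfl⟩

lemma linearIndependent_mk_monomial (S : Set (Fin n →₀ ℕ)) (d : ℕ) :
    LinearIndependent K fun s : standardExponents S d =>
      Ideal.Quotient.mk (Ideal.span ((fun s => monomial s (1 : K)) '' S)) (monomial s.1 1) := by
  have hmono : LinearIndependent K fun s : standardExponents S d =>
      (monomial s.1 (1 : K) : MvPolynomial (Fin n) K) :=
    (basisMonomials (Fin n) K).linearIndependent.comp _ Subtype.val_injective
  refine hmono.map (f := (Ideal.Quotient.mkₐ K _).toLinearMap) ?_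
  rw [Submodule.disjoint_def]
  intro x hx hker
  have hsupp : ↑x.support ⊆ standardExponents S d := by
    have hx' : x ∈ AddMonoidAlgebra.supported K K (standardExponents S d) := by
      rw [AddMonoidAlgebra.supported_eq_span_single, Set.image_eq_range]
      exact hx
    exact AddMonoidAlgebra.mem_supported.mp hx'
  rw [LinearMap.mem_ker, AlgHom.toLinearMap_apply, Ideal.Quotient.mkₐ_eq_mk,
    Ideal.Quotient.eq_zero_iff_mem, mem_ideal_span_monomial_image] at hker
  rw [← support_eq_empty, Finset.eq_empty_iff_forall_notMem]
  intro u hu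
  obtain ⟨t, ht, htu⟩ := hker u hu
  exact (hsupp hu).2 t ht htu

lemma hilb_monomialIdeal (S : Set (Fin n →₀ ℕ)) (d : ℕ) :
    hilb K (Ideal.span ((fun s => monomial s (1 : K)) '' S)) d =
      (standardExponents S d).ncard := by
  rw [hilb, comp_monomialIdeal_eq_span, Module.finrank_eq_nat_card_basis
    (Module.Basis.span (linearIndependent_mk_monomial S d)), Nat.card_coe_set_eq]

end MonomialIdeal

@[simps]
noncomputable def finThreeArrowEquiv' (M : Type*) [Zero M] : (Fin 3 →₀ M) ≃ M × M × M where
  toFun s := (s 0, s 1, s 2)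
  invFun p := Finsupp.equivFunOnFinite.symm ![p.1, p.2.1, p.2.2]
  left_inv s := by ext i; fin_cases i <;> rfl
  right_inv _ := rfl

lemma ciIdeal_eq_span_monomial (K : Type*) [Field K] (a b c : ℕ) :
    ciIdeal K a b c = Ideal.span ((fun s => monomial s (1 : K)) ''
      {Finsupp.single 0 a, Finsupp.single 1 b, Finsupp.single 2 c}) := by
  simp only [ciIdeal, Set.image_insert_eq, Set.image_singleton, X_pow_eq_monomial]

lemma ncard_standardExponents_single (a b c d : ℕ) :
    (standardExponents
        {Finsupp.single (0 : Fin 3) a, Finsupp.single 1 b, Finsupp.single 2 c} d).ncard =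
      boxCount₃ a b c d := by
  rw [← Set.ncard_image_of_injective _ (finThreeArrowEquiv' ℕ).injective,
    Equiv.image_eq_preimage_symm, boxCount₃, ← Set.ncard_coe_finset]
  congr 1
  ext ⟨i, j, k⟩
  simp only [standardExponents, Finsupp.degree_eq_sum, Fin.sum_univ_three, Set.mem_insert_iff,
    Set.mem_singleton_iff, forall_eq_or_imp, Finsupp.single_le_iff, not_le, forall_eq,
    Set.preimage_ofPred_eq, finThreeArrowEquiv'_symm_apply,
    Finsupp.equivFunOnFinite_symm_apply_apply, Matrix.cons_val_zero, Matrix.cons_val_one,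
    Matrix.cons_val, Set.mem_ofPred_eq, coe_filter, mem_product, mem_range]
  omega

lemma hilb_ciIdeal (K : Type*) [Field K] (a b c : ℕ) (e : ℤ) :
    hilb K (ciIdeal K a b c) e = boxCount₃ a b c e := by
  obtain he | he := lt_or_ge e 0
  · rw [hilb_of_neg K _ he, boxCount₃_of_neg a b c he]
  · lift e to ℕ using he
    rw [ciIdeal_eq_span_monomial, hilb_monomialIdeal, ncard_standardExponents_single]

/-- **Lemma (h-ci, Reid–Roberts–Roitman).** For the Hilbert function `h` of
`K[x,y,z]/(xᵃ,yᵇ,zᶜ)` and `1 ≤ j ≤ a+b+c-1`: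
`h(j-2) < h(j-1)` iff `1 ≤ j < min{a+b, a+c, b+c, (a+b+c)/2}`;
`h(j-2) = h(j-1)` iff `min{a+b, a+c, b+c, (a+b+c)/2} ≤ j ≤ max{a, b, c, (a+b+c)/2}`;
`h(j-2) > h(j-1)` iff `max{a, b, c, (a+b+c)/2} < j ≤ a+b+c-1`. -/
theorem stmt13 {K : Type*} [Field K] (a b c : ℕ) (ha : 0 < a) (hb : 0 < b) (hc : 0 < c)
    (j : ℤ) (hj1 : 1 ≤ j) (hj2 : j ≤ (a : ℤ) + b + c - 1) :
    ((hilb K (ciIdeal K a b c) (j - 2) < hilb K (ciIdeal K a b c) (j - 1)) ↔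
      (1 ≤ j ∧ j < (a : ℤ) + b ∧ j < (a : ℤ) + c ∧ j < (b : ℤ) + c ∧ 2 * j < (a : ℤ) + b + c)) ∧
    ((hilb K (ciIdeal K a b c) (j - 2) = hilb K (ciIdeal K a b c) (j - 1)) ↔
      (((a : ℤ) + b ≤ j ∨ (a : ℤ) + c ≤ j ∨ (b : ℤ) + c ≤ j ∨ (a : ℤ) + b + c ≤ 2 * j) ∧
        (j ≤ (a : ℤ) ∨ j ≤ (b : ℤ) ∨ j ≤ (c : ℤ) ∨ 2 * j ≤ (a : ℤ) + b + c))) ∧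
    ((hilb K (ciIdeal K a b c) (j - 1) < hilb K (ciIdeal K a b c) (j - 2)) ↔
      (((a : ℤ) < j ∧ (b : ℤ) < j ∧ (c : ℤ) < j ∧ (a : ℤ) + b + c < 2 * j) ∧
        j ≤ (a : ℤ) + b + c - 1)) := by
  have hΔ := boxCount₃_sub_boxCount₃_sub_one a b c (j - 1)
  rw [sub_sub, one_add_one_eq_two] at hΔ
  simp only [hilb_ciIdeal]
  refine ⟨?_, ?_, ?_⟩ <;> omega
end
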